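/- arXiv:0906.3128 — 2 statements merged into one kernel-verified Lean document; each statement's English description precedes it below -/
import Mathlib

section
/- Dhar's formula: for finite Λ ⊂ Z^d, γ ≥ 0 with Δ^{(γ)}_Λ invertible, and x, y ∈ Λ, the expectation under the uniform measure m^{(γ)}_Λ on allowed configurations of the number n^{(γ)}_Λ(x,y,η) of topplings at y during stabilization of η + δ_x equals (Δ^{(γ)}_Λ)^{−1}_{xy}. -/
/-- Sites of the lattice `ℤ^d`. -/
abbrev Site (d : ℕ) := Fin d → ℤ

/-- ℓ¹ (taxicab) distance on `ℤ^d`. -/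
def dist1 {d : ℕ} (x y : Site d) : ℕ := ∑ i, (x i - y i).natAbs

/-- The unit step in direction `i`, with sign given by `b`. -/
def step {d : ℕ} (i : Fin d) (b : Bool) : Site d :=
  fun j => if j = i then (if b then 1 else -1) else 0

/-- `p d n x y` is the `n`-step transition probability of the simple random
walk on `ℤ^d` stepping to each of the `2d` nearest neighbors with
probability `1/(2d)`. -/
noncomputable def srwP (d : ℕ) : ℕ → Site d → Site d → ℝ
  | 0, x, y => if x = y then 1 else 0
  | n + 1, x, y => (1 / (2 * d)) * ∑ s : Fin d × Bool, srwP d n (x + step s.1 s.2) y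


/-- Sites of a finite volume `Λ ⊂ ℤ^d`. -/
abbrev SiteIn (d : ℕ) (Λ : Finset (Site d)) := {z : Site d // z ∈ Λ}

/-- Height configurations in the finite volume `Λ`. -/
abbrev ConfigIn (d : ℕ) (Λ : Finset (Site d)) := SiteIn d Λ → ℝ

/-- The toppling matrix `Δ^{(γ)}_Λ` restricted to `Λ`. -/
noncomputable def toppleMatIn (d : ℕ) (γ : ℝ) (Λ : Finset (Site d)) :
    Matrix (SiteIn d Λ) (SiteIn d Λ) ℝ :=
  fun x y =>
    if (x : Site d) = (y : Site d) then 2 * d + γ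
    else if dist1 (x : Site d) (y : Site d) = 1 then -1 else 0

/-- `η` is allowed: it contains no forbidden subconfiguration, i.e. for every
nonempty `W ⊆ Λ` there is `y ∈ W` whose height is at least the number of
neighbors of `y` inside `W`. -/
def isAllowed (d : ℕ) (Λ : Finset (Site d)) (η : ConfigIn d Λ) : Prop :=
  ∀ W : Finset (SiteIn d Λ), W.Nonempty →
    ∃ y ∈ W,
      ((W.filter fun z : SiteIn d Λ => dist1 (z : Site d) (y : Site d) = 1).card : ℝ) ≤ η y

/-- The set `R^{(γ)}_Λ` of allowed stable configurations in `[0, 2d+γ)^Λ`. -/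
def allowedSet (d : ℕ) (γ : ℝ) (Λ : Finset (Site d)) : Set (ConfigIn d Λ) :=
  {η | (∀ y, 0 ≤ η y ∧ η y < 2 * d + γ) ∧ isAllowed d Λ η}

/-- Toppling at `x ∈ Λ`: subtract the row `(Δ^{(γ)}_Λ)_{x,·}` (mass sent to
sites outside `Λ` is lost). -/
noncomputable def toppleIn (d : ℕ) (γ : ℝ) (Λ : Finset (Site d)) (x : SiteIn d Λ)
    (η : ConfigIn d Λ) : ConfigIn d Λ :=
  fun y => η y - toppleMatIn d γ Λ x y

/-- Apply a finite sequence of topplings in `Λ`. -/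
noncomputable def applyListIn (d : ℕ) (γ : ℝ) (Λ : Finset (Site d)) :
    List (SiteIn d Λ) → ConfigIn d Λ → ConfigIn d Λ
  | [], η => η
  | x :: l, η => applyListIn d γ Λ l (toppleIn d γ Λ x η)

/-- Legality of a sequence of topplings in `Λ`: each toppled site is unstable
(height `≥ 2d+γ`) when toppled. -/
def legalListIn (d : ℕ) (γ : ℝ) (Λ : Finset (Site d)) :
    ConfigIn d Λ → List (SiteIn d Λ) → Prop
  | _, [] => True
  | η, x :: l => 2 * d + γ ≤ η x ∧ legalListIn d γ Λ (toppleIn d γ Λ x η) l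

/-- A stabilizing sequence in `Λ`: legal, with stable final configuration. -/
def stabilizingListIn (d : ℕ) (γ : ℝ) (Λ : Finset (Site d)) (η : ConfigIn d Λ)
    (l : List (SiteIn d Λ)) : Prop :=
  legalListIn d γ Λ η l ∧ ∀ y, applyListIn d γ Λ l η y < 2 * d + γ

/-- The stabilization map `S^{(γ)}_Λ` (via a choice of stabilizing sequence;
independent of the choice by abelianness). -/
noncomputable def stabilizeIn (d : ℕ) (γ : ℝ) (Λ : Finset (Site d))
    (η : ConfigIn d Λ) : ConfigIn d Λ :=
  open scoped Classical in
  if h : ∃ l, stabilizingListIn d γ Λ η l then applyListIn d γ Λ h.choose η else η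

/-- Unit mass at `x ∈ Λ`. -/
noncomputable def deltaIn (d : ℕ) (Λ : Finset (Site d)) (x : SiteIn d Λ) :
    ConfigIn d Λ :=
  fun y => if y = x then 1 else 0

/-- The addition operator `a^{(γ)}_{Λ,x} η = S^{(γ)}_Λ(η + δ_x)`. -/
noncomputable def addOpIn (d : ℕ) (γ : ℝ) (Λ : Finset (Site d)) (x : SiteIn d Λ)
    (η : ConfigIn d Λ) : ConfigIn d Λ :=
  stabilizeIn d γ Λ (η + deltaIn d Λ x)

/-- `n^{(γ)}_Λ(x,y,η)`: the number of topplings at `y` during stabilization of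
`η + δ_x` in `Λ` (via a choice of stabilizing sequence; independent of the
choice by abelianness). -/
noncomputable def nTopIn (d : ℕ) (γ : ℝ) (Λ : Finset (Site d))
    (x y : SiteIn d Λ) (η : ConfigIn d Λ) : ℕ :=
  open scoped Classical in
  if h : ∃ l, stabilizingListIn d γ Λ (η + deltaIn d Λ x) l then h.choose.count y
  else 0

open MeasureTheory

section Det
variable {d : ℕ} {γ : ℝ} {Λ : Finset (Site d)}

lemma dist1_self (z : Site d) : dist1 z z = 0 := by
  simp [dist1]

lemma toppleMat_decomp (w z : SiteIn d Λ) :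
    toppleMatIn d γ Λ w z =
      (if w = z then 2 * d + γ else 0) -
        (if dist1 (w : Site d) (z : Site d) = 1 then 1 else 0) := by
  rcases eq_or_ne w z with h | h
  · subst h
    simp [toppleMatIn, dist1_self]
  · have hc : (w : Site d) ≠ (z : Site d) := fun hh => h (Subtype.ext hh)
    by_cases h1 : dist1 (w : Site d) (z : Site d) = 1 <;>
      simp [toppleMatIn, hc, h1, h]

lemma applyList_eq (l : List (SiteIn d Λ)) (ζ : ConfigIn d Λ) (z : SiteIn d Λ) :
    applyListIn d γ Λ l ζ z =
      ζ z - ∑ w, (l.count w : ℝ) * toppleMatIn d γ Λ w z := by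
  induction l generalizing ζ with
  | nil => simp [applyListIn]
  | cons a t ih =>
      have : applyListIn d γ Λ (a :: t) ζ z =
          applyListIn d γ Λ t (toppleIn d γ Λ a ζ) z := rfl
      rw [this, ih]
      have hc : ∀ w : SiteIn d Λ, ((a :: t).count w : ℝ) =
          (t.count w : ℝ) + (if w = a then 1 else 0) := by
        intro w
        rcases eq_or_ne w a with h | h
        · subst h; simp [List.count_cons]
        · simp [List.count_cons, h, Ne.symm h]
      simp only [hc, add_mul, Finset.sum_add_distrib]
      have : (∑ w : SiteIn d Λ, (if w = a then (1:ℝ) else 0) * toppleMatIn d γ Λ w z)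
          = toppleMatIn d γ Λ a z := by
        rw [Finset.sum_eq_single a]
        · simp
        · intro b _ hb; simp [hb]
        · intro h; exact absurd (Finset.mem_univ a) h
      rw [this]
      simp [toppleIn]
      ring

lemma legalList_cons {ζ : ConfigIn d Λ} {a : SiteIn d Λ} {l : List (SiteIn d Λ)} :
    legalListIn d γ Λ ζ (a :: l) ↔
      (2 * d + γ ≤ ζ a ∧ legalListIn d γ Λ (toppleIn d γ Λ a ζ) l) := Iff.rfl

/-- allowedness is monotone. -/
lemma isAllowed_mono {η η' : ConfigIn d Λ} (h : ∀ z, η z ≤ η' z)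
    (hη : isAllowed d Λ η) : isAllowed d Λ η' := by
  intro W hW
  obtain ⟨y, hy, hcard⟩ := hη W hW
  exact ⟨y, hy, hcard.trans (h y)⟩

lemma allowed_nonneg {η : ConfigIn d Λ} (hη : isAllowed d Λ η) (z : SiteIn d Λ) :
    0 ≤ η z := by
  obtain ⟨y, hy, hcard⟩ := hη {z} ⟨z, Finset.mem_singleton_self z⟩
  rw [Finset.mem_singleton] at hy
  subst hy
  refine le_trans ?_ hcard
  simp [Finset.filter_singleton, dist1_self]

/-- A single legal toppling preserves allowedness. -/
lemma topple_allowed (hγ : 0 ≤ γ) {η : ConfigIn d Λ} {t : SiteIn d Λ}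
    (hη : isAllowed d Λ η) (hleg : 2 * d + γ ≤ η t) :
    isAllowed d Λ (toppleIn d γ Λ t η) := by
  intro W hW
  by_cases htW : t ∈ W
  · by_cases hW' : (W.erase t).Nonempty
    · obtain ⟨y, hy, hcard⟩ := hη (W.erase t) hW'
      have hyW : y ∈ W := Finset.mem_of_mem_erase hy
      have hyt : y ≠ t := Finset.ne_of_mem_erase hy
      have hty : t ≠ y := fun hh => hyt hh.symm
      refine ⟨y, hyW, ?_⟩
      have hval : toppleIn d γ Λ t η y =
          η y + (if dist1 (t : Site d) (y : Site d) = 1 then 1 else 0) := by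
        show η y - toppleMatIn d γ Λ t y = _
        rw [toppleMat_decomp]
        simp [hty]
      have hsub : (W.filter fun z : SiteIn d Λ => dist1 (z : Site d) (y : Site d) = 1)
          ⊆ insert t ((W.erase t).filter
            fun z : SiteIn d Λ => dist1 (z : Site d) (y : Site d) = 1) := by
        intro z hz
        rw [Finset.mem_filter] at hz
        rcases eq_or_ne z t with h | h
        · subst h; exact Finset.mem_insert_self _ _
        · exact Finset.mem_insert_of_mem
            (Finset.mem_filter.2 ⟨Finset.mem_erase.2 ⟨h, hz.1⟩, hz.2⟩)
      by_cases hd1 : dist1 (t : Site d) (y : Site d) = 1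
      · have hle : (W.filter fun z : SiteIn d Λ =>
            dist1 (z : Site d) (y : Site d) = 1).card ≤
            ((W.erase t).filter
              fun z : SiteIn d Λ => dist1 (z : Site d) (y : Site d) = 1).card + 1 := by
          refine le_trans (Finset.card_le_card hsub) ?_
          exact le_trans (Finset.card_insert_le _ _) (le_refl _)
        rw [hval]
        simp only [hd1, if_true]
        have : ((W.filter fun z : SiteIn d Λ =>
            dist1 (z : Site d) (y : Site d) = 1).card : ℝ) ≤
            (((W.erase t).filter
              fun z : SiteIn d Λ => dist1 (z : Site d) (y : Site d) = 1).card : ℝ) + 1 := by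
          exact_mod_cast hle
        linarith
      · have hsub2 : (W.filter fun z : SiteIn d Λ =>
            dist1 (z : Site d) (y : Site d) = 1)
            ⊆ (W.erase t).filter
              fun z : SiteIn d Λ => dist1 (z : Site d) (y : Site d) = 1 := by
          intro z hz
          rw [Finset.mem_filter] at hz
          have hzt : z ≠ t := by
            rintro rfl; exact hd1 hz.2
          exact Finset.mem_filter.2 ⟨Finset.mem_erase.2 ⟨hzt, hz.1⟩, hz.2⟩
        have hle : ((W.filter fun z : SiteIn d Λ =>
            dist1 (z : Site d) (y : Site d) = 1).card : ℝ) ≤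
            (((W.erase t).filter
              fun z : SiteIn d Λ => dist1 (z : Site d) (y : Site d) = 1).card : ℝ) := by
          exact_mod_cast Finset.card_le_card hsub2
        rw [hval]
        simp only [hd1, if_false]
        linarith
    · have hWt : ∀ z ∈ W, z = t := by
        intro z hz
        by_contra h
        exact hW' ⟨z, Finset.mem_erase.2 ⟨h, hz⟩⟩
      refine ⟨t, htW, ?_⟩
      have hfil : (W.filter fun z : SiteIn d Λ =>
          dist1 (z : Site d) (t : Site d) = 1) = ∅ := by
        rw [Finset.filter_eq_empty_iff]
        intro z hz
        rw [hWt z hz]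
        simp [dist1_self]
      rw [hfil]
      have hval : toppleIn d γ Λ t η t = η t - (2 * d + γ) := by
        show η t - toppleMatIn d γ Λ t t = _
        rw [toppleMat_decomp]
        simp [dist1_self]
      rw [hval]
      simp only [Finset.card_empty, Nat.cast_zero]
      linarith
  · obtain ⟨y, hy, hcard⟩ := hη W hW
    refine ⟨y, hy, ?_⟩
    have hyt : y ≠ t := fun hh => htW (hh ▸ hy)
    have hty : t ≠ y := fun hh => hyt hh.symm
    have hmat : toppleMatIn d γ Λ t y ≤ 0 := by
      rw [toppleMat_decomp]
      simp only [hty, if_false]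
      split <;> norm_num
    have : toppleIn d γ Λ t η y = η y - toppleMatIn d γ Λ t y := rfl
    rw [this]
    linarith

/-- Legal topplings preserve allowedness. -/
lemma legal_allowed (hγ : 0 ≤ γ) {ζ : ConfigIn d Λ} {l : List (SiteIn d Λ)}
    (hl : legalListIn d γ Λ ζ l) (hζ : isAllowed d Λ ζ) :
    isAllowed d Λ (applyListIn d γ Λ l ζ) := by
  induction l generalizing ζ with
  | nil => exact hζ
  | cons a t ih =>
      obtain ⟨h1, h2⟩ := hl
      exact ih h2 (topple_allowed hγ hζ h1)

end Det
section Det2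
variable {d : ℕ} {γ : ℝ} {Λ : Finset (Site d)}

lemma dist1_one_struct {a b : Site d} (h : dist1 a b = 1) :
    ∃ i, (a i - b i).natAbs = 1 ∧ ∀ j, j ≠ i → a j = b j := by
  classical
  unfold dist1 at h
  have hne : ∃ i ∈ Finset.univ, (a i - b i).natAbs ≠ 0 := by
    by_contra hc
    push_neg at hc
    have : ∑ i, (a i - b i).natAbs = 0 :=
      Finset.sum_eq_zero fun i hi => by simpa using hc i (Finset.mem_univ i)
    omega
  obtain ⟨i, _, hi⟩ := hne
  have hle : (a i - b i).natAbs ≤ 1 := by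
    calc (a i - b i).natAbs ≤ ∑ j, (a j - b j).natAbs :=
          Finset.single_le_sum (f := fun j => (a j - b j).natAbs)
            (fun j _ => Nat.zero_le _) (Finset.mem_univ i)
      _ = 1 := h
  have hi1 : (a i - b i).natAbs = 1 := by omega
  refine ⟨i, hi1, fun j hj => ?_⟩
  have hsplit : ∑ k, (a k - b k).natAbs
      = (a i - b i).natAbs + ∑ k ∈ Finset.univ.erase i, (a k - b k).natAbs :=
    (Finset.add_sum_erase _ _ (Finset.mem_univ i)).symm
  have hz : ∑ k ∈ Finset.univ.erase i, (a k - b k).natAbs = 0 := by omega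
  have := (Finset.sum_eq_zero_iff.mp hz) j (Finset.mem_erase.2 ⟨hj, Finset.mem_univ j⟩)
  have : a j - b j = 0 := Int.natAbs_eq_zero.mp this
  linarith [this]

lemma nbr_card_le (hd : 0 < d) (z : Site d) (S : Finset (SiteIn d Λ)) :
    (S.filter fun w : SiteIn d Λ => dist1 (w : Site d) z = 1).card ≤ 2 * d := by
  classical
  haveI : NeZero d := ⟨hd.ne'⟩
  set s := S.filter fun w : SiteIn d Λ => dist1 (w : Site d) z = 1 with hs
  have key : ∀ w : SiteIn d Λ, w ∈ s →
      ∃ i, ((w : Site d) i - z i).natAbs = 1 ∧ ∀ j, j ≠ i → (w : Site d) j = z j := by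
    intro w hw
    rw [hs, Finset.mem_filter] at hw
    exact dist1_one_struct hw.2
  let f : SiteIn d Λ → Fin d × Bool := fun w =>
    if h : ∃ i, ((w : Site d) i - z i).natAbs = 1
    then (h.choose, decide ((w : Site d) h.choose - z h.choose = 1))
    else (⟨0, hd⟩, true)
  have hcard : s.card ≤ (Finset.univ : Finset (Fin d × Bool)).card := by
    refine Finset.card_le_card_of_injOn f (fun a _ => Finset.mem_univ _) ?_
    intro w hw w' hw' hff
    obtain ⟨i, hi1, hiu⟩ := key w hw
    obtain ⟨i', hi1', hiu'⟩ := key w' hw'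
    have hex : ∃ k, ((w : Site d) k - z k).natAbs = 1 := ⟨i, hi1⟩
    have hex' : ∃ k, ((w' : Site d) k - z k).natAbs = 1 := ⟨i', hi1'⟩
    have hchoose : hex.choose = i := by
      by_contra hne
      have := hiu hex.choose hne
      have h0 : ((w : Site d) hex.choose - z hex.choose).natAbs = 1 := hex.choose_spec
      rw [this] at h0
      simp at h0
    have hchoose' : hex'.choose = i' := by
      by_contra hne
      have := hiu' hex'.choose hne
      have h0 : ((w' : Site d) hex'.choose - z hex'.choose).natAbs = 1 := hex'.choose_spec
      rw [this] at h0
      simp at h0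
    have hfw : f w = (i, decide ((w : Site d) i - z i = 1)) := by
      simp only [f, dif_pos hex]
      rw [hchoose]
    have hfw' : f w' = (i', decide ((w' : Site d) i' - z i' = 1)) := by
      simp only [f, dif_pos hex']
      rw [hchoose']
    rw [hfw, hfw'] at hff
    have hii : i = i' := congrArg Prod.fst hff
    subst hii
    have hb : ((w : Site d) i - z i = 1) ↔ ((w' : Site d) i - z i = 1) := by
      have := congrArg Prod.snd hff
      simpa using this
    have heqi : (w : Site d) i = (w' : Site d) i := by
      rcases Int.natAbs_eq_iff.mp hi1 with h | h <;>
        rcases Int.natAbs_eq_iff.mp hi1' with h' | h'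
      · omega
      · exfalso
        have := hb.mp (by omega)
        omega
      · exfalso
        have := hb.mpr (by omega)
        omega
      · omega
    apply Subtype.ext
    funext j
    rcases eq_or_ne j i with rfl | hj
    · exact heqi
    · rw [hiu j hj, hiu' j hj]
  calc s.card ≤ (Finset.univ : Finset (Fin d × Bool)).card := hcard
    _ = 2 * d := by simp [Finset.card_univ, mul_comm]

lemma sum_toppleMat_eq (K : SiteIn d Λ → ℤ) (z : SiteIn d Λ) :
    ∑ w, (K w : ℝ) * toppleMatIn d γ Λ w z =
      (K z : ℝ) * (2 * d + γ) -
        ∑ w ∈ Finset.univ.filter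
          (fun w : SiteIn d Λ => dist1 (w : Site d) (z : Site d) = 1), (K w : ℝ) := by
  classical
  have : ∀ w : SiteIn d Λ, (K w : ℝ) * toppleMatIn d γ Λ w z =
      (if w = z then (K w : ℝ) * (2 * d + γ) else 0) -
        (if dist1 (w : Site d) (z : Site d) = 1 then (K w : ℝ) else 0) := by
    intro w
    rw [toppleMat_decomp]
    by_cases h1 : w = z <;> by_cases h2 : dist1 (w : Site d) (z : Site d) = 1 <;>
      simp [h1, h2, mul_ite, mul_one, mul_zero, mul_sub] <;> ring
  rw [Finset.sum_congr rfl fun w _ => this w, Finset.sum_sub_distrib]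
  congr 1
  · rw [Finset.sum_ite_eq' Finset.univ z (fun w => (K w : ℝ) * (2 * d + γ))]
    simp
  · rw [Finset.sum_filter]

lemma rigidity_half (hd : 0 < d) (hγ : 0 ≤ γ) {ξ ξ' : ConfigIn d Λ}
    (hstab : ∀ z, ξ z < 2 * d + γ) (hall : isAllowed d Λ ξ')
    {K : SiteIn d Λ → ℤ}
    (hrel : ∀ z, ξ z = ξ' z + ∑ w, (K w : ℝ) * toppleMatIn d γ Λ w z)
    (w₀ : SiteIn d Λ) : K w₀ ≤ 0 := by
  classical
  by_contra hpos
  push_neg at hpos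
  obtain ⟨z₀, _, hz₀⟩ := Finset.exists_max_image Finset.univ K ⟨w₀, Finset.mem_univ w₀⟩
  set M : ℤ := K z₀ with hM
  have hM1 : 1 ≤ M := le_trans hpos (hz₀ w₀ (Finset.mem_univ w₀))
  set W : Finset (SiteIn d Λ) := Finset.univ.filter (fun w => K w = M) with hWdef
  have hWne : W.Nonempty := ⟨z₀, by simp [hWdef, hM]⟩
  obtain ⟨z, hzW, hcard⟩ := hall W hWne
  have hKz : K z = M := by
    rw [hWdef, Finset.mem_filter] at hzW
    exact hzW.2
  set Nz : Finset (SiteIn d Λ) :=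
    Finset.univ.filter (fun w : SiteIn d Λ => dist1 (w : Site d) (z : Site d) = 1) with hNz
  have hbound : ∀ w ∈ Nz, (K w : ℝ) ≤ (M - 1 : ℤ) + (if w ∈ W then 1 else 0) := by
    intro w _
    by_cases hw : w ∈ W
    · have hKw : K w = M := (Finset.mem_filter.mp hw).2
      rw [if_pos hw, hKw]
      push_cast
      linarith
    · have : K w ≠ M := by
        intro h
        exact hw (by simp [hWdef, h])
      have h1 : K w ≤ M - 1 := by
        have := hz₀ w (Finset.mem_univ w)
        omega
      rw [if_neg hw]
      have h1' : (K w : ℝ) ≤ (M : ℝ) - 1 := by exact_mod_cast h1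
      push_cast
      linarith
  have hsum_le : ∑ w ∈ Nz, (K w : ℝ) ≤
      (Nz.card : ℝ) * ((M : ℝ) - 1) + ((Nz.filter (· ∈ W)).card : ℝ) := by
    calc ∑ w ∈ Nz, (K w : ℝ)
        ≤ ∑ w ∈ Nz, (((M - 1 : ℤ) : ℝ) + (if w ∈ W then 1 else 0)) :=
          Finset.sum_le_sum hbound
      _ = (Nz.card : ℝ) * ((M : ℝ) - 1) + ((Nz.filter (· ∈ W)).card : ℝ) := by
          rw [Finset.sum_add_distrib, Finset.sum_const, Finset.sum_boole]
          push_cast [nsmul_eq_mul]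
          ring
  have hfil : Nz.filter (· ∈ W) = W.filter (fun w : SiteIn d Λ => dist1 (w : Site d) (z : Site d) = 1) := by
    ext w
    simp only [hNz, hWdef, Finset.mem_filter, Finset.mem_univ, true_and]
    tauto
  have hNze : ((Nz.card : ℝ)) ≤ 2 * d := by
    have := nbr_card_le (Λ := Λ) hd (z : Site d) Finset.univ
    exact_mod_cast this
  have hS : ∑ w, (K w : ℝ) * toppleMatIn d γ Λ w z =
      (M : ℝ) * (2 * d + γ) - ∑ w ∈ Nz, (K w : ℝ) := by
    rw [sum_toppleMat_eq, hKz]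
  have hcard' : (((Nz.filter (· ∈ W)).card : ℝ)) ≤ ξ' z := by
    rw [hfil]
    exact hcard
  have hzval := hrel z
  rw [hS] at hzval
  have hMr : (1 : ℝ) ≤ (M : ℝ) := by exact_mod_cast hM1
  have hfinal : 2 * d + γ ≤ ξ z := by
    have h2 : ξ z ≥ ((Nz.filter (· ∈ W)).card : ℝ) + (M : ℝ) * (2 * d + γ)
        - ((Nz.card : ℝ) * ((M : ℝ) - 1) + ((Nz.filter (· ∈ W)).card : ℝ)) := by
      linarith
    nlinarith [mul_nonneg (sub_nonneg.mpr hMr) (sub_nonneg.mpr hNze), hγ,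
      mul_nonneg (sub_nonneg.mpr hMr) hγ]
  linarith [hstab z]

end Det2
section Det3
variable {d : ℕ} {γ : ℝ} {Λ : Finset (Site d)}

lemma rigidity (hd : 0 < d) (hγ : 0 ≤ γ) {ξ ξ' : ConfigIn d Λ}
    (hs : ∀ z, ξ z < 2 * d + γ) (hs' : ∀ z, ξ' z < 2 * d + γ)
    (ha : isAllowed d Λ ξ) (ha' : isAllowed d Λ ξ')
    {K : SiteIn d Λ → ℤ}
    (hrel : ∀ z, ξ z = ξ' z + ∑ w, (K w : ℝ) * toppleMatIn d γ Λ w z)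
    (w : SiteIn d Λ) : K w = 0 := by
  have h1 := rigidity_half hd hγ hs ha' hrel w
  have hrel' : ∀ z, ξ' z = ξ z + ∑ w, ((-K) w : ℝ) * toppleMatIn d γ Λ w z := by
    intro z
    have := hrel z
    have hsum : ∑ w, ((-K) w : ℝ) * toppleMatIn d γ Λ w z
        = - ∑ w, (K w : ℝ) * toppleMatIn d γ Λ w z := by
      rw [← Finset.sum_neg_distrib]
      refine Finset.sum_congr rfl fun w _ => ?_
      simp only [Pi.neg_apply]
      push_cast
      ring
    rw [hsum]
    linarith
  have h2 := rigidity_half hd hγ hs' ha hrel' w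
  simp only [Pi.neg_apply, neg_nonpos] at h2
  omega

lemma delta_allowed {η : ConfigIn d Λ} (hη : isAllowed d Λ η) (x : SiteIn d Λ) :
    isAllowed d Λ (η + deltaIn d Λ x) := by
  refine isAllowed_mono (fun z => ?_) hη
  have : (η + deltaIn d Λ x) z = η z + deltaIn d Λ x z := rfl
  rw [this]
  have : (0:ℝ) ≤ deltaIn d Λ x z := by
    unfold deltaIn
    split <;> norm_num
  linarith

lemma counts_unique (hd : 0 < d) (hγ : 0 ≤ γ) {ζ : ConfigIn d Λ}
    (hζ : isAllowed d Λ ζ) {l l' : List (SiteIn d Λ)}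
    (hl : stabilizingListIn d γ Λ ζ l) (hl' : stabilizingListIn d γ Λ ζ l')
    (w : SiteIn d Λ) : l.count w = l'.count w := by
  have hall : isAllowed d Λ (applyListIn d γ Λ l ζ) := legal_allowed hγ hl.1 hζ
  have hall' : isAllowed d Λ (applyListIn d γ Λ l' ζ) := legal_allowed hγ hl'.1 hζ
  set K : SiteIn d Λ → ℤ := fun w => (l'.count w : ℤ) - (l.count w : ℤ) with hK
  have hrel : ∀ z, applyListIn d γ Λ l ζ z =
      applyListIn d γ Λ l' ζ z + ∑ w, (K w : ℝ) * toppleMatIn d γ Λ w z := by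
    intro z
    rw [applyList_eq, applyList_eq]
    have : ∑ w, (K w : ℝ) * toppleMatIn d γ Λ w z =
        ∑ w, ((l'.count w : ℝ) - (l.count w : ℝ)) * toppleMatIn d γ Λ w z := by
      refine Finset.sum_congr rfl fun w _ => ?_
      simp only [hK]
      push_cast
      ring
    rw [this]
    simp only [sub_mul]
    rw [Finset.sum_sub_distrib]
    ring
  have := rigidity hd hγ hl.2 hl'.2 hall hall' hrel w
  simp only [hK] at this
  omega

lemma nTop_eq_count (hd : 0 < d) (hγ : 0 ≤ γ) {η : ConfigIn d Λ}
    (hη : isAllowed d Λ η) (x w : SiteIn d Λ) {l : List (SiteIn d Λ)}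
    (hl : stabilizingListIn d γ Λ (η + deltaIn d Λ x) l) :
    nTopIn d γ Λ x w η = l.count w := by
  unfold nTopIn
  rw [dif_pos ⟨l, hl⟩]
  exact counts_unique hd hγ (delta_allowed hη x)
    (Exists.choose_spec (⟨l, hl⟩ : ∃ l, stabilizingListIn d γ Λ (η + deltaIn d Λ x) l)) hl w

lemma addOp_eq (hd : 0 < d) (hγ : 0 ≤ γ) {η : ConfigIn d Λ}
    (hη : isAllowed d Λ η) (x : SiteIn d Λ) {l : List (SiteIn d Λ)}
    (hl : stabilizingListIn d γ Λ (η + deltaIn d Λ x) l) (z : SiteIn d Λ) :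
    addOpIn d γ Λ x η z = η z + deltaIn d Λ x z
      - ∑ w, (l.count w : ℝ) * toppleMatIn d γ Λ w z := by
  unfold addOpIn stabilizeIn
  rw [dif_pos ⟨l, hl⟩, applyList_eq]
  have hch := Exists.choose_spec (⟨l, hl⟩ : ∃ l', stabilizingListIn d γ Λ (η + deltaIn d Λ x) l')
  have hcnt : ∀ w, (Exists.choose (⟨l, hl⟩ : ∃ l', stabilizingListIn d γ Λ (η + deltaIn d Λ x) l')).count w
      = l.count w := fun w => counts_unique hd hγ (delta_allowed hη x) hch hl w
  have : (η + deltaIn d Λ x) z = η z + deltaIn d Λ x z := rfl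
  rw [this]
  congr 1
  refine Finset.sum_congr rfl fun w _ => ?_
  rw [hcnt w]

lemma addOp_mem (hd : 0 < d) (hγ : 0 ≤ γ) {η : ConfigIn d Λ}
    (hη : η ∈ allowedSet d γ Λ)
    (x : SiteIn d Λ) {l : List (SiteIn d Λ)}
    (hl : stabilizingListIn d γ Λ (η + deltaIn d Λ x) l) :
    addOpIn d γ Λ x η ∈ allowedSet d γ Λ := by
  have hδ : isAllowed d Λ (η + deltaIn d Λ x) := delta_allowed hη.2 x
  unfold addOpIn stabilizeIn
  rw [dif_pos ⟨l, hl⟩]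
  have hch := Exists.choose_spec (⟨l, hl⟩ : ∃ l', stabilizingListIn d γ Λ (η + deltaIn d Λ x) l')
  have hall : isAllowed d Λ
      (applyListIn d γ Λ
        (Exists.choose (⟨l, hl⟩ : ∃ l', stabilizingListIn d γ Λ (η + deltaIn d Λ x) l'))
        (η + deltaIn d Λ x)) :=
    legal_allowed hγ hch.1 hδ
  exact ⟨fun z => ⟨allowed_nonneg hall z, hch.2 z⟩, hall⟩

end Det3
section Det4
variable {d : ℕ} {γ : ℝ} {Λ : Finset (Site d)}

lemma measurable_toppleIn (x : SiteIn d Λ) : Measurable (toppleIn d γ Λ x) := by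
  unfold toppleIn
  exact measurable_pi_lambda _ fun z => (measurable_pi_apply z).sub measurable_const

lemma measurable_applyList (l : List (SiteIn d Λ)) :
    Measurable (applyListIn d γ Λ l) := by
  induction l with
  | nil => exact measurable_id
  | cons a t ih =>
      have : applyListIn d γ Λ (a :: t) =
          (applyListIn d γ Λ t) ∘ (toppleIn d γ Λ a) := rfl
      rw [this]
      exact ih.comp (measurable_toppleIn a)

lemma measurableSet_legal (l : List (SiteIn d Λ)) :
    MeasurableSet {ζ : ConfigIn d Λ | legalListIn d γ Λ ζ l} := by
  induction l with
  | nil =>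
      have : {ζ : ConfigIn d Λ | legalListIn d γ Λ ζ []} = Set.univ := by
        ext ζ; simp [legalListIn]
      rw [this]; exact MeasurableSet.univ
  | cons a t ih =>
      have : {ζ : ConfigIn d Λ | legalListIn d γ Λ ζ (a :: t)} =
          {ζ : ConfigIn d Λ | 2 * d + γ ≤ ζ a} ∩
            (toppleIn d γ Λ a) ⁻¹' {ζ : ConfigIn d Λ | legalListIn d γ Λ ζ t} := by
        ext ζ; rfl
      rw [this]
      exact (measurableSet_le measurable_const (measurable_pi_apply a)).inter
        ((measurable_toppleIn a) ih)

lemma measurableSet_stab (l : List (SiteIn d Λ)) :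
    MeasurableSet {ζ : ConfigIn d Λ | stabilizingListIn d γ Λ ζ l} := by
  have : {ζ : ConfigIn d Λ | stabilizingListIn d γ Λ ζ l} =
      {ζ : ConfigIn d Λ | legalListIn d γ Λ ζ l} ∩
        ⋂ y, {ζ : ConfigIn d Λ | applyListIn d γ Λ l ζ y < 2 * d + γ} := by
    ext ζ
    simp [stabilizingListIn, Set.mem_iInter]
  rw [this]
  refine (measurableSet_legal l).inter (MeasurableSet.iInter fun y => ?_)
  exact measurableSet_lt ((measurable_pi_apply y).comp (measurable_applyList l))
    measurable_const

lemma measurableSet_allowedSet : MeasurableSet (allowedSet d γ Λ) := by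
  have : allowedSet d γ Λ =
      (⋂ z, {η : ConfigIn d Λ | 0 ≤ η z} ∩ {η : ConfigIn d Λ | η z < 2 * d + γ}) ∩
        ⋂ W : Finset (SiteIn d Λ),
          {η : ConfigIn d Λ | W.Nonempty → ∃ y ∈ W,
            ((W.filter fun z : SiteIn d Λ =>
              dist1 (z : Site d) (y : Site d) = 1).card : ℝ) ≤ η y} := by
    ext η
    simp only [allowedSet, isAllowed, Set.mem_setOf_eq, Set.mem_inter_iff,
      Set.mem_iInter, Set.mem_setOf_eq]
  rw [this]
  refine MeasurableSet.inter (MeasurableSet.iInter fun z => ?_)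
    (MeasurableSet.iInter fun W => ?_)
  · exact (measurableSet_le measurable_const (measurable_pi_apply z)).inter
      (measurableSet_lt (measurable_pi_apply z) measurable_const)
  · by_cases hW : W.Nonempty
    · have : {η : ConfigIn d Λ | W.Nonempty → ∃ y ∈ W,
          ((W.filter fun z : SiteIn d Λ =>
            dist1 (z : Site d) (y : Site d) = 1).card : ℝ) ≤ η y} =
          ⋃ y ∈ W, {η : ConfigIn d Λ |
            ((W.filter fun z : SiteIn d Λ =>
              dist1 (z : Site d) (y : Site d) = 1).card : ℝ) ≤ η y} := by
        ext η
        simp [hW]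
      rw [this]
      exact MeasurableSet.biUnion W.countable_toSet fun y _ =>
        measurableSet_le measurable_const (measurable_pi_apply y)
    · have : {η : ConfigIn d Λ | W.Nonempty → ∃ y ∈ W,
          ((W.filter fun z : SiteIn d Λ =>
            dist1 (z : Site d) (y : Site d) = 1).card : ℝ) ≤ η y} = Set.univ := by
        ext η
        simp [hW]
      rw [this]
      exact MeasurableSet.univ

lemma measurable_addDelta (x : SiteIn d Λ) :
    Measurable (fun η : ConfigIn d Λ => η + deltaIn d Λ x) := by
  exact measurable_pi_lambda _ fun z => (measurable_pi_apply z).add measurable_const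

lemma volume_allowedSet_lt_top (hd : 0 < d) (hγ : 0 ≤ γ) :
    MeasureTheory.volume (allowedSet d γ Λ) < ⊤ := by
  have hsub : allowedSet d γ Λ ⊆ Set.univ.pi fun _ : SiteIn d Λ => Set.Ico (0:ℝ) (2*d+γ) := by
    intro η hη z _
    exact ⟨(hη.1 z).1, (hη.1 z).2⟩
  refine lt_of_le_of_lt (MeasureTheory.measure_mono hsub) ?_
  rw [MeasureTheory.volume_pi_pi]
  refine ENNReal.prod_lt_top fun z _ => ?_
  rw [Real.volume_Ico]
  exact ENNReal.ofReal_lt_top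

lemma integrableOn_bounded {S : Set (ConfigIn d Λ)} (hS : MeasurableSet S)
    (hfin : MeasureTheory.volume S < ⊤) {f : ConfigIn d Λ → ℝ} (hf : Measurable f)
    {M : ℝ} (hb : ∀ η ∈ S, |f η| ≤ M) :
    MeasureTheory.IntegrableOn f S MeasureTheory.volume := by
  refine MeasureTheory.Integrable.mono'
    (g := fun _ => M)
    (MeasureTheory.integrableOn_const hfin.ne) hf.aestronglyMeasurable ?_
  rw [MeasureTheory.ae_restrict_iff' hS]
  exact MeasureTheory.ae_of_all _ fun η hη => by
    simpa [Real.norm_eq_abs] using hb η hη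

end Det4
section Det5
variable {d : ℕ} {γ : ℝ} {Λ : Finset (Site d)}

/-- The translation vector for a given toppling-count vector. -/
noncomputable def pieceC (d : ℕ) (γ : ℝ) (Λ : Finset (Site d)) (x : SiteIn d Λ)
    (k : SiteIn d Λ → ℕ) : ConfigIn d Λ :=
  fun z => deltaIn d Λ x z - ∑ w, (k w : ℝ) * toppleMatIn d γ Λ w z

/-- The piece of the allowed set on which the count vector equals `k`. -/
def pieceA (d : ℕ) (γ : ℝ) (Λ : Finset (Site d)) (x : SiteIn d Λ)
    (k : SiteIn d Λ → ℕ) : Set (ConfigIn d Λ) :=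
  allowedSet d γ Λ ∩
    {η | ∃ l, stabilizingListIn d γ Λ (η + deltaIn d Λ x) l ∧ ∀ w, l.count w = k w}

lemma measurableSet_pieceA (x : SiteIn d Λ) (k : SiteIn d Λ → ℕ) :
    MeasurableSet (pieceA d γ Λ x k) := by
  have : pieceA d γ Λ x k = allowedSet d γ Λ ∩
      ⋃ l : List (SiteIn d Λ), ⋃ (_ : ∀ w, l.count w = k w),
        (fun η : ConfigIn d Λ => η + deltaIn d Λ x) ⁻¹'
          {ζ : ConfigIn d Λ | stabilizingListIn d γ Λ ζ l} := by
    ext η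
    simp only [pieceA, Set.mem_inter_iff, Set.mem_setOf_eq, Set.mem_iUnion,
      Set.mem_preimage, Set.mem_setOf_eq]
    tauto
  rw [this]
  exact measurableSet_allowedSet.inter <| MeasurableSet.iUnion fun l =>
    MeasurableSet.iUnion fun _ => (measurable_addDelta x) (measurableSet_stab l)

lemma pieceA_nTop (hd : 0 < d) (hγ : 0 ≤ γ) (x : SiteIn d Λ) {k : SiteIn d Λ → ℕ}
    {η : ConfigIn d Λ} (hη : η ∈ pieceA d γ Λ x k) (w : SiteIn d Λ) :
    nTopIn d γ Λ x w η = k w := by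
  obtain ⟨hηR, l, hl, hcnt⟩ := hη
  rw [nTop_eq_count hd hγ hηR.2 x w hl, hcnt w]

lemma pieceA_addOp (hd : 0 < d) (hγ : 0 ≤ γ) (x : SiteIn d Λ) {k : SiteIn d Λ → ℕ}
    {η : ConfigIn d Λ} (hη : η ∈ pieceA d γ Λ x k) :
    addOpIn d γ Λ x η = η + pieceC d γ Λ x k := by
  obtain ⟨hηR, l, hl, hcnt⟩ := hη
  funext z
  rw [addOp_eq hd hγ hηR.2 x hl z]
  have : (η + pieceC d γ Λ x k) z = η z + pieceC d γ Λ x k z := rfl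
  rw [this]
  unfold pieceC
  have : ∑ w, (l.count w : ℝ) * toppleMatIn d γ Λ w z
      = ∑ w, (k w : ℝ) * toppleMatIn d γ Λ w z :=
    Finset.sum_congr rfl fun w _ => by rw [hcnt w]
  rw [this]
  ring

lemma pieceA_disjoint (hd : 0 < d) (hγ : 0 ≤ γ) (x : SiteIn d Λ)
    {k k' : SiteIn d Λ → ℕ} (hkk : k ≠ k') :
    Disjoint (pieceA d γ Λ x k) (pieceA d γ Λ x k') := by
  rw [Set.disjoint_left]
  rintro η ⟨hηR, l, hl, hcnt⟩ ⟨_, l', hl', hcnt'⟩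
  apply hkk
  funext w
  rw [← hcnt w, ← hcnt' w]
  exact counts_unique hd hγ (delta_allowed hηR.2 x) hl hl' w

/-- The count vector of a stabilizing sequence, recovered by matrix inversion. -/
lemma count_eq_vecMul (hdet : IsUnit (toppleMatIn d γ Λ).det) (x : SiteIn d Λ)
    {η : ConfigIn d Λ} {l : List (SiteIn d Λ)}
    (hl : stabilizingListIn d γ Λ (η + deltaIn d Λ x) l) (w : SiteIn d Λ) :
    (l.count w : ℝ) = ∑ z, (η z + deltaIn d Λ x z
        - applyListIn d γ Λ l (η + deltaIn d Λ x) z) * (toppleMatIn d γ Λ)⁻¹ z w := by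
  classical
  set ξ := applyListIn d γ Λ l (η + deltaIn d Λ x) with hξ
  have hvec : Matrix.vecMul (fun w => (l.count w : ℝ)) (toppleMatIn d γ Λ)
      = fun z => η z + deltaIn d Λ x z - ξ z := by
    funext z
    have happ : ξ z = (η + deltaIn d Λ x) z
        - ∑ w, (l.count w : ℝ) * toppleMatIn d γ Λ w z := by
      rw [hξ, applyList_eq]
    have hadd : (η + deltaIn d Λ x) z = η z + deltaIn d Λ x z := rfl
    rw [Matrix.vecMul, dotProduct]
    rw [hadd] at happ
    linarith [happ]
  have hk : (fun w => (l.count w : ℝ))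
      = Matrix.vecMul (fun z => η z + deltaIn d Λ x z - ξ z) (toppleMatIn d γ Λ)⁻¹ := by
    rw [← hvec, Matrix.vecMul_vecMul, Matrix.mul_nonsing_inv _ hdet, Matrix.vecMul_one]
  have := congrFun hk w
  rw [this, Matrix.vecMul, dotProduct]

/-- Uniform bound on toppling counts over the allowed set. -/
noncomputable def countBound (d : ℕ) (γ : ℝ) (Λ : Finset (Site d)) : ℕ :=
  ⌈∑ p : SiteIn d Λ × SiteIn d Λ, (2 * d + γ + 1) * |(toppleMatIn d γ Λ)⁻¹ p.1 p.2|⌉₊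

lemma count_le (hd : 0 < d) (hγ : 0 ≤ γ) (hdet : IsUnit (toppleMatIn d γ Λ).det)
    (x : SiteIn d Λ) {η : ConfigIn d Λ} (hη : η ∈ allowedSet d γ Λ)
    {l : List (SiteIn d Λ)} (hl : stabilizingListIn d γ Λ (η + deltaIn d Λ x) l)
    (w : SiteIn d Λ) : l.count w ≤ countBound d γ Λ := by
  classical
  set ξ := applyListIn d γ Λ l (η + deltaIn d Λ x) with hξ
  have hξa : isAllowed d Λ ξ := legal_allowed hγ hl.1 (delta_allowed hη.2 x)
  have hbd : ∀ z, |η z + deltaIn d Λ x z - ξ z| ≤ 2 * d + γ + 1 := by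
    intro z
    have h1 := (hη.1 z).1
    have h2 := (hη.1 z).2
    have h3 := allowed_nonneg hξa z
    have h4 := hl.2 z
    rw [← hξ] at h4
    have h5 : (0:ℝ) ≤ deltaIn d Λ x z := by unfold deltaIn; split <;> norm_num
    have h6 : deltaIn d Λ x z ≤ 1 := by unfold deltaIn; split <;> norm_num
    rw [abs_le]
    constructor <;> linarith
  have := count_eq_vecMul hdet x hl w
  rw [← hξ] at this
  have hle : (l.count w : ℝ) ≤
      ∑ p : SiteIn d Λ × SiteIn d Λ, (2 * d + γ + 1) * |(toppleMatIn d γ Λ)⁻¹ p.1 p.2| := by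
    rw [this]
    have step1 : ∑ z, (η z + deltaIn d Λ x z - ξ z) * (toppleMatIn d γ Λ)⁻¹ z w
        ≤ ∑ z, (2 * d + γ + 1) * |(toppleMatIn d γ Λ)⁻¹ z w| := by
      refine Finset.sum_le_sum fun z _ => ?_
      calc (η z + deltaIn d Λ x z - ξ z) * (toppleMatIn d γ Λ)⁻¹ z w
          ≤ |(η z + deltaIn d Λ x z - ξ z) * (toppleMatIn d γ Λ)⁻¹ z w| := le_abs_self _
        _ = |η z + deltaIn d Λ x z - ξ z| * |(toppleMatIn d γ Λ)⁻¹ z w| := abs_mul _ _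
        _ ≤ (2 * d + γ + 1) * |(toppleMatIn d γ Λ)⁻¹ z w| :=
            mul_le_mul_of_nonneg_right (hbd z) (abs_nonneg _)
    refine le_trans step1 ?_
    rw [Fintype.sum_prod_type]
    refine Finset.sum_le_sum fun z _ => ?_
    refine Finset.single_le_sum (f := fun w' =>
      (2 * (d:ℝ) + γ + 1) * |(toppleMatIn d γ Λ)⁻¹ z w'|) (fun w' _ => by positivity)
      (Finset.mem_univ w)
  have : (l.count w : ℝ) ≤ (countBound d γ Λ : ℝ) :=
    le_trans hle (Nat.le_ceil _)
  exact_mod_cast this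

end Det5
section Det6
variable {d : ℕ} {γ : ℝ} {Λ : Finset (Site d)}

/-- The finite set of possible count vectors. -/
noncomputable def pieceF (d : ℕ) (γ : ℝ) (Λ : Finset (Site d)) :
    Finset (SiteIn d Λ → ℕ) :=
  Fintype.piFinset fun _ => Finset.range (countBound d γ Λ + 1)

lemma allowed_eq_biUnion (hd : 0 < d) (hγ : 0 ≤ γ)
    (hdet : IsUnit (toppleMatIn d γ Λ).det) (x : SiteIn d Λ)
    (hex : ∀ ζ : ConfigIn d Λ, ∃ l, stabilizingListIn d γ Λ ζ l) :
    allowedSet d γ Λ = ⋃ k ∈ pieceF d γ Λ, pieceA d γ Λ x k := by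
  ext η
  constructor
  · intro hη
    obtain ⟨l, hl⟩ := hex (η + deltaIn d Λ x)
    refine Set.mem_biUnion (show (fun w => l.count w) ∈ pieceF d γ Λ from ?_)
      (⟨hη, l, hl, fun w => rfl⟩ : η ∈ pieceA d γ Λ x (fun w => l.count w))
    simp only [pieceF, Fintype.mem_piFinset, Finset.mem_range]
    intro w
    have := count_le hd hγ hdet x hη hl w
    omega
  · intro hη
    obtain ⟨k, _, hk⟩ := Set.mem_iUnion₂.mp hη
    exact hk.1

/-- The translated piece (image of `pieceA` under the addition operator). -/
noncomputable def pieceB (d : ℕ) (γ : ℝ) (Λ : Finset (Site d)) (x : SiteIn d Λ)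
    (k : SiteIn d Λ → ℕ) : Set (ConfigIn d Λ) :=
  (fun ξ : ConfigIn d Λ => ξ + -pieceC d γ Λ x k) ⁻¹' pieceA d γ Λ x k

lemma measurableSet_pieceB (x : SiteIn d Λ) (k : SiteIn d Λ → ℕ) :
    MeasurableSet (pieceB d γ Λ x k) :=
  (measurable_add_const _) (measurableSet_pieceA x k)

lemma measurePreserving_shift (c : ConfigIn d Λ) :
    MeasureTheory.MeasurePreserving (fun ξ : ConfigIn d Λ => ξ + c)
      MeasureTheory.volume MeasureTheory.volume :=
  MeasureTheory.measurePreserving_add_right MeasureTheory.volume c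

lemma volume_pieceB (x : SiteIn d Λ) (k : SiteIn d Λ → ℕ) :
    MeasureTheory.volume (pieceB d γ Λ x k) = MeasureTheory.volume (pieceA d γ Λ x k) :=
  (measurePreserving_shift (-pieceC d γ Λ x k)).measure_preimage
    (measurableSet_pieceA x k).nullMeasurableSet

lemma pieceB_subset (hd : 0 < d) (hγ : 0 ≤ γ) (x : SiteIn d Λ) (k : SiteIn d Λ → ℕ) :
    pieceB d γ Λ x k ⊆ allowedSet d γ Λ := by
  intro ξ hξ
  have hη : ξ + -pieceC d γ Λ x k ∈ pieceA d γ Λ x k := hξ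
  obtain ⟨hηR, l, hl, hcnt⟩ := id hη
  have := addOp_mem hd hγ hηR x hl
  have heq : addOpIn d γ Λ x (ξ + -pieceC d γ Λ x k) = ξ := by
    rw [pieceA_addOp hd hγ x hη]
    funext z
    simp
  rwa [heq] at this

lemma pieceB_disjoint (hd : 0 < d) (hγ : 0 ≤ γ) (x : SiteIn d Λ)
    {k k' : SiteIn d Λ → ℕ} (hkk : k ≠ k') :
    Disjoint (pieceB d γ Λ x k) (pieceB d γ Λ x k') := by
  rw [Set.disjoint_left]
  intro ξ hξ hξ'
  have hη : ξ + -pieceC d γ Λ x k ∈ pieceA d γ Λ x k := hξ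
  have hη' : ξ + -pieceC d γ Λ x k' ∈ pieceA d γ Λ x k' := hξ'
  set η := ξ + -pieceC d γ Λ x k with hηd
  set η' := ξ + -pieceC d γ Λ x k' with hηd'
  have hRk := hη.1
  have hRk' := hη'.1
  set K : SiteIn d Λ → ℤ := fun w => (k w : ℤ) - (k' w : ℤ) with hK
  have hrel : ∀ z, η z = η' z + ∑ w, (K w : ℝ) * toppleMatIn d γ Λ w z := by
    intro z
    have h1 : η z = ξ z - pieceC d γ Λ x k z := by
      rw [hηd]; simp [sub_eq_add_neg]
    have h2 : η' z = ξ z - pieceC d γ Λ x k' z := by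
      rw [hηd']; simp [sub_eq_add_neg]
    rw [h1, h2]
    unfold pieceC
    have : ∑ w, (K w : ℝ) * toppleMatIn d γ Λ w z
        = ∑ w, ((k w : ℝ) - (k' w : ℝ)) * toppleMatIn d γ Λ w z := by
      refine Finset.sum_congr rfl fun w _ => ?_
      simp only [hK]
      push_cast
      ring
    rw [this]
    simp only [sub_mul]
    rw [Finset.sum_sub_distrib]
    ring
  have hz := rigidity hd hγ (fun z => (hRk.1 z).2) (fun z => (hRk'.1 z).2)
    hRk.2 hRk'.2 hrel
  apply hkk
  funext w
  have := hz w
  simp only [hK] at this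
  omega

end Det6
open MeasureTheory

/-- Dhar's formula: the expectation under the uniform measure `m^{(γ)}_Λ` on
allowed configurations of the number of topplings at `y` upon addition at `x`
equals `(Δ^{(γ)}_Λ)⁻¹_{xy}`. -/
theorem dhar_formula (d : ℕ) (hd : 0 < d) (γ : ℝ) (hγ : 0 ≤ γ)
    (Λ : Finset (Site d)) (x y : SiteIn d Λ)
    (hdet : IsUnit (toppleMatIn d γ Λ).det)
    (hex : ∀ ζ : ConfigIn d Λ, ∃ l, stabilizingListIn d γ Λ ζ l) :
    ∫ η in allowedSet d γ Λ, (nTopIn d γ Λ x y η : ℝ) =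
      (toppleMatIn d γ Λ)⁻¹ x y * (volume (allowedSet d γ Λ)).toReal := by
  classical
  have hθ : (0:ℝ) ≤ 2 * d + γ := by positivity
  have hRmeas := measurableSet_allowedSet (d := d) (γ := γ) (Λ := Λ)
  have hRfin := volume_allowedSet_lt_top (Λ := Λ) hd hγ
  set F := pieceF d γ Λ with hF
  have hAmeas : ∀ k, MeasurableSet (pieceA d γ Λ x k) := measurableSet_pieceA x
  have hAsub : ∀ k, pieceA d γ Λ x k ⊆ allowedSet d γ Λ := fun k =>
    Set.inter_subset_left
  have hAfin : ∀ k, volume (pieceA d γ Λ x k) < ⊤ := fun k =>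
    lt_of_le_of_lt (measure_mono (hAsub k)) hRfin
  have hBmeas : ∀ k, MeasurableSet (pieceB d γ Λ x k) := measurableSet_pieceB x
  have hBsub : ∀ k, pieceB d γ Λ x k ⊆ allowedSet d γ Λ := fun k =>
    pieceB_subset hd hγ x k
  have hcover : allowedSet d γ Λ = ⋃ k ∈ F, pieceA d γ Λ x k :=
    allowed_eq_biUnion hd hγ hdet x hex
  have hAdisj : (↑F : Set (SiteIn d Λ → ℕ)).PairwiseDisjoint (pieceA d γ Λ x) :=
    fun k _ k' _ hkk => pieceA_disjoint hd hγ x hkk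
  have hBdisj : (↑F : Set (SiteIn d Λ → ℕ)).PairwiseDisjoint (pieceB d γ Λ x) :=
    fun k _ k' _ hkk => pieceB_disjoint hd hγ x hkk
  have hvolR : volume (allowedSet d γ Λ) = ∑ k ∈ F, volume (pieceA d γ Λ x k) := by
    rw [hcover]
    exact measure_biUnion_finset hAdisj fun k _ => hAmeas k
  have hvolB : volume (⋃ k ∈ F, pieceB d γ Λ x k) = volume (allowedSet d γ Λ) := by
    rw [measure_biUnion_finset hBdisj fun k _ => hBmeas k, hvolR]
    exact Finset.sum_congr rfl fun k _ => volume_pieceB x k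
  have hBusub : (⋃ k ∈ F, pieceB d γ Λ x k) ⊆ allowedSet d γ Λ :=
    Set.iUnion₂_subset fun k _ => hBsub k
  have hBumeas : MeasurableSet (⋃ k ∈ F, pieceB d γ Λ x k) :=
    F.measurableSet_biUnion fun k _ => hBmeas k
  have hnull : volume (allowedSet d γ Λ \ ⋃ k ∈ F, pieceB d γ Λ x k) = 0 := by
    rw [measure_diff hBusub hBumeas.nullMeasurableSet (by rw [hvolB]; exact hRfin.ne),
      hvolB, tsub_self]
  have haeeq : (allowedSet d γ Λ : Set (ConfigIn d Λ))
      =ᵐ[volume] (⋃ k ∈ F, pieceB d γ Λ x k) := by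
    rw [MeasureTheory.ae_eq_set]
    refine ⟨hnull, ?_⟩
    rw [Set.diff_eq_empty.mpr hBusub]
    exact measure_empty
  have hIntR : ∀ z : SiteIn d Λ,
      IntegrableOn (fun η : ConfigIn d Λ => η z) (allowedSet d γ Λ) volume := by
    intro z
    refine integrableOn_bounded hRmeas hRfin (measurable_pi_apply z)
      (M := 2 * d + γ) ?_
    intro η hη
    rw [abs_le]
    exact ⟨by linarith [(hη.1 z).1], le_of_lt (hη.1 z).2⟩
  have hshift : ∀ k, ∀ z : SiteIn d Λ,
      ∫ ξ in pieceB d γ Λ x k, ξ z =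
        (∫ η in pieceA d γ Λ x k, η z) +
          pieceC d γ Λ x k z * (volume (pieceA d γ Λ x k)).toReal := by
    intro k z
    have hemb : MeasurableEmbedding (fun ξ : ConfigIn d Λ => ξ + -pieceC d γ Λ x k) :=
      measurableEmbedding_addRight (-pieceC d γ Λ x k)
    have hmp := measurePreserving_shift (Λ := Λ) (-pieceC d γ Λ x k)
    have hpre := hmp.setIntegral_preimage_emb hemb
      (fun η : ConfigIn d Λ => η z + pieceC d γ Λ x k z) (pieceA d γ Λ x k)
    have hint : ∀ ξ : ConfigIn d Λ,
        (ξ + -pieceC d γ Λ x k) z + pieceC d γ Λ x k z = ξ z := by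
      intro ξ; simp
    simp only [hint] at hpre
    have hBdef : pieceB d γ Λ x k =
        (fun ξ : ConfigIn d Λ => ξ + -pieceC d γ Λ x k) ⁻¹' pieceA d γ Λ x k := rfl
    rw [hBdef, hpre,
      integral_add ((hIntR z).mono_set (hAsub k)) (integrableOn_const (hAfin k).ne),
      setIntegral_const, measureReal_def, smul_eq_mul, mul_comm]
  have hbalance : ∀ z : SiteIn d Λ,
      ∑ k ∈ F, pieceC d γ Λ x k z * (volume (pieceA d γ Λ x k)).toReal = 0 := by
    intro z
    have h1 : ∫ η in allowedSet d γ Λ, η z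
        = ∑ k ∈ F, ∫ η in pieceA d γ Λ x k, η z := by
      rw [hcover]
      exact integral_biUnion_finset F (fun k _ => hAmeas k) hAdisj
        (fun k _ => (hIntR z).mono_set (hAsub k))
    have h2 : ∫ η in allowedSet d γ Λ, η z
        = ∑ k ∈ F, ∫ ξ in pieceB d γ Λ x k, ξ z := by
      rw [setIntegral_congr_set haeeq]
      exact integral_biUnion_finset F (fun k _ => hBmeas k) hBdisj
        (fun k _ => (hIntR z).mono_set (hBsub k))
    have h3 : ∑ k ∈ F, ∫ ξ in pieceB d γ Λ x k, ξ z
        = (∑ k ∈ F, ∫ η in pieceA d γ Λ x k, η z) +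
          ∑ k ∈ F, pieceC d γ Λ x k z * (volume (pieceA d γ Λ x k)).toReal := by
      rw [← Finset.sum_add_distrib]
      exact Finset.sum_congr rfl fun k _ => hshift k z
    have key := h2
    rw [h3, ← h1] at key
    linarith
  have hLHS : ∫ η in allowedSet d γ Λ, (nTopIn d γ Λ x y η : ℝ)
      = ∑ k ∈ F, (k y : ℝ) * (volume (pieceA d γ Λ x k)).toReal := by
    have heqon : ∀ k, Set.EqOn (fun η : ConfigIn d Λ => (nTopIn d γ Λ x y η : ℝ))
        (fun _ => (k y : ℝ)) (pieceA d γ Λ x k) := by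
      intro k η hη
      simp only
      rw [pieceA_nTop hd hγ x hη y]
    have h1 : ∫ η in allowedSet d γ Λ, (nTopIn d γ Λ x y η : ℝ)
        = ∑ k ∈ F, ∫ η in pieceA d γ Λ x k, (nTopIn d γ Λ x y η : ℝ) := by
      rw [hcover]
      refine integral_biUnion_finset F (fun k _ => hAmeas k) hAdisj (fun k _ => ?_)
      exact (integrableOn_const (hAfin k).ne).congr_fun (heqon k).symm (hAmeas k)
    rw [h1]
    refine Finset.sum_congr rfl fun k _ => ?_
    rw [setIntegral_congr_fun (hAmeas k) (heqon k), setIntegral_const, measureReal_def, smul_eq_mul,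
      mul_comm]
  have hsumR : ∑ k ∈ F, (volume (pieceA d γ Λ x k)).toReal
      = (volume (allowedSet d γ Λ)).toReal := by
    rw [hvolR, ENNReal.toReal_sum fun k _ => (hAfin k).ne]
  have hvm : ∀ z : SiteIn d Λ,
      ∑ w, (∑ k ∈ F, (k w : ℝ) * (volume (pieceA d γ Λ x k)).toReal)
          * toppleMatIn d γ Λ w z
        = deltaIn d Λ x z * (volume (allowedSet d γ Λ)).toReal := by
    intro z
    have hb := hbalance z
    have hexp : ∀ k, pieceC d γ Λ x k z * (volume (pieceA d γ Λ x k)).toReal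
        = deltaIn d Λ x z * (volume (pieceA d γ Λ x k)).toReal
          - ∑ w, (k w : ℝ) * (volume (pieceA d γ Λ x k)).toReal * toppleMatIn d γ Λ w z := by
      intro k
      unfold pieceC
      rw [sub_mul, Finset.sum_mul]
      congr 1
      refine Finset.sum_congr rfl fun w _ => ?_
      ring
    rw [Finset.sum_congr rfl fun k _ => hexp k, Finset.sum_sub_distrib] at hb
    have hswap : ∑ k ∈ F, ∑ w, (k w : ℝ) * (volume (pieceA d γ Λ x k)).toReal
          * toppleMatIn d γ Λ w z
        = ∑ w, (∑ k ∈ F, (k w : ℝ) * (volume (pieceA d γ Λ x k)).toReal)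
            * toppleMatIn d γ Λ w z := by
      rw [Finset.sum_comm]
      refine Finset.sum_congr rfl fun w _ => ?_
      rw [Finset.sum_mul]
    rw [hswap] at hb
    have hd1 : ∑ k ∈ F, deltaIn d Λ x z * (volume (pieceA d γ Λ x k)).toReal
        = deltaIn d Λ x z * (volume (allowedSet d γ Λ)).toReal := by
      rw [← Finset.mul_sum, hsumR]
    rw [hd1] at hb
    linarith
  have hvm' : Matrix.vecMul
      (fun w => ∑ k ∈ F, (k w : ℝ) * (volume (pieceA d γ Λ x k)).toReal)
      (toppleMatIn d γ Λ)
      = fun z => deltaIn d Λ x z * (volume (allowedSet d γ Λ)).toReal := by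
    funext z
    rw [Matrix.vecMul, dotProduct]
    exact hvm z
  have hIinv : (fun w => ∑ k ∈ F, (k w : ℝ) * (volume (pieceA d γ Λ x k)).toReal)
      = Matrix.vecMul
        (fun z => deltaIn d Λ x z * (volume (allowedSet d γ Λ)).toReal)
        (toppleMatIn d γ Λ)⁻¹ := by
    rw [← hvm', Matrix.vecMul_vecMul, Matrix.mul_nonsing_inv _ hdet, Matrix.vecMul_one]
  have hIy := congrFun hIinv y
  rw [Matrix.vecMul, dotProduct] at hIy
  rw [hLHS, hIy]
  rw [Finset.sum_eq_single x]
  · unfold deltaIn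
    simp only [if_pos rfl, if_true]
    norm_num
    ring
  · intro z _ hzx
    unfold deltaIn
    rw [if_neg hzx]
    ring
  · intro h
    exact absurd (Finset.mem_univ x) h
end

section
/- Let γ ≥ 0 and let η ∈ [0,∞)^{Z^d} be γ-stabilizable (i.e., in any exhaustive sequence of legal topplings each site topples finitely often, with toppling numbers N^{(γ)}(η)). Then N^{(γ)}(η)_x = sup over finite Λ of N^{(γ)}_Λ(η)_x for every x ∈ Z^d, and the infinite-volume stabilization S^{(γ)}(η) = η − Δ^{(γ)} N^{(γ)}(η) equals the pointwise limit of the finite-volume stabilizations S^{(γ)}_Λ(η) along any exhaustion Λ ↑ Z^d. -/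
/-- Height configurations on `ℤ^d` (heights are reals). -/
abbrev Config (d : ℕ) := Site d → ℝ

/-- The toppling matrix `Δ^{(γ)}`: `2d+γ` on the diagonal, `-1` on
nearest-neighbor pairs, `0` otherwise. -/
noncomputable def toppleMat (d : ℕ) (γ : ℝ) (x y : Site d) : ℝ :=
  if x = y then 2 * d + γ else if dist1 x y = 1 then -1 else 0

/-- Toppling site `x`: subtract the row `Δ^{(γ)}_{x,·}` from the configuration. -/
noncomputable def topple (d : ℕ) (γ : ℝ) (x : Site d) (η : Config d) : Config d :=
  fun y => η y - toppleMat d γ x y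

/-- Apply a finite sequence of topplings. -/
noncomputable def applyList (d : ℕ) (γ : ℝ) : List (Site d) → Config d → Config d
  | [], η => η
  | x :: l, η => applyList d γ l (topple d γ x η)

/-- A sequence of topplings, all at sites of `Λ`, is legal if each toppled site
is unstable (height `≥ 2d+γ`) at the moment it is toppled. -/
def legalList (d : ℕ) (γ : ℝ) (Λ : Finset (Site d)) : Config d → List (Site d) → Prop
  | _, [] => True
  | η, x :: l => x ∈ Λ ∧ 2 * d + γ ≤ η x ∧ legalList d γ Λ (topple d γ x η) l

/-- A `(Λ,γ)`-stabilizing sequence: a legal sequence of topplings in `Λ` whose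
final configuration is stable (`< 2d+γ`) at every site of `Λ`. -/
def stabilizingList (d : ℕ) (γ : ℝ) (Λ : Finset (Site d)) (η : Config d)
    (l : List (Site d)) : Prop :=
  legalList d γ Λ η l ∧ ∀ x ∈ Λ, applyList d γ l η x < 2 * d + γ

/-- Apply an optional toppling (`none` = no toppling at this time). -/
noncomputable def toppleO (d : ℕ) (γ : ℝ) (o : Option (Site d)) (η : Config d) :
    Config d :=
  match o with
  | none => η
  | some x => topple d γ x η

/-- The sequence of configurations obtained from `η` by performing the
(possibly infinite) sequence of topplings `s`. -/
noncomputable def cfgSeq (d : ℕ) (γ : ℝ) (η : Config d) (s : ℕ → Option (Site d)) :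
    ℕ → Config d
  | 0 => η
  | n + 1 => toppleO d γ (s n) (cfgSeq d γ η s n)

/-- A sequence of topplings is legal if every toppled site is unstable
(height `≥ 2d+γ`) at the moment it is toppled. -/
def legalSeq (d : ℕ) (γ : ℝ) (η : Config d) (s : ℕ → Option (Site d)) : Prop :=
  ∀ n x, s n = some x → 2 * d + γ ≤ cfgSeq d γ η s n x

/-- A sequence of topplings is exhaustive if every site that is unstable at some
time is toppled at some later time. -/
def exhaustiveSeq (d : ℕ) (γ : ℝ) (η : Config d) (s : ℕ → Option (Site d)) : Prop :=
  ∀ n x, 2 * d + γ ≤ cfgSeq d γ η s n x → ∃ m, n ≤ m ∧ s m = some x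

/-- `η` is `γ`-stabilizable: in some (equivalently, any) exhaustive legal
sequence of topplings, every site topples finitely often. -/
def Stabilizable (d : ℕ) (γ : ℝ) (η : Config d) : Prop :=
  ∃ s : ℕ → Option (Site d), legalSeq d γ η s ∧ exhaustiveSeq d γ η s ∧
    ∀ x : Site d, {m : ℕ | s m = some x}.Finite

/-- The toppling numbers `N^{(γ)}(η)_x` of an exhaustive legal sequence
(independent of the choice of sequence). -/
noncomputable def Ncount (d : ℕ) (γ : ℝ) (η : Config d) (x : Site d) : ℕ :=
  open scoped Classical in
  if h : Stabilizable d γ η then Nat.card {m : ℕ | h.choose m = some x} else 0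

/-- The infinite-volume stabilization `S^{(γ)}(η) = η − Δ^{(γ)} N^{(γ)}(η)`. -/
noncomputable def stabilizeInf (d : ℕ) (γ : ℝ) (η : Config d) : Config d :=
  fun x => η x - (2 * d + γ) * (Ncount d γ η x : ℝ) +
    ∑ s : Fin d × Bool, (Ncount d γ η (x + step s.1 s.2) : ℝ)

section Lemmas

variable {d : ℕ}

lemma step_ne_zero (i : Fin d) (b : Bool) : step i b ≠ 0 := by
  intro h
  have := congrFun h i
  simp [step] at this
  cases b <;> simp_all

lemma dist1_add_step (z : Site d) (i : Fin d) (b : Bool) :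
    dist1 (z + step i b) z = 1 := by
  unfold dist1
  have : ∀ j, ((z + step i b) j - z j).natAbs = if j = i then 1 else 0 := by
    intro j
    simp only [Pi.add_apply, step]
    by_cases h : j = i <;> simp [h] <;> cases b <;> simp
  rw [Finset.sum_congr rfl (fun j _ => this j)]
  simp

lemma step_inj {i i' : Fin d} {b b' : Bool} (h : step i b = step i' b') :
    i = i' ∧ b = b' := by
  have hi : i = i' := by
    by_contra hne
    have := congrFun h i
    simp [step, hne] at this
    cases b <;> simp_all
  subst hi
  refine ⟨rfl, ?_⟩
  have := congrFun h i
  simp [step] at this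
  cases b <;> cases b' <;> simp_all

lemma exists_unique_step {y z : Site d} (h : dist1 y z = 1) :
    ∃! e : Fin d × Bool, y = z + step e.1 e.2 := by
  unfold dist1 at h
  -- find the coordinate where they differ
  have hex : ∃ i, (y i - z i).natAbs ≠ 0 := by
    by_contra hc
    push_neg at hc
    rw [Finset.sum_eq_zero (fun i _ => hc i)] at h
    exact absurd h.symm one_ne_zero
  obtain ⟨i₀, hi₀⟩ := hex
  have hone : (y i₀ - z i₀).natAbs = 1 := by
    have h1 : (y i₀ - z i₀).natAbs ≤ 1 := by
      rw [← h]
      exact Finset.single_le_sum (f := fun i => (y i - z i).natAbs)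
        (fun i _ => Nat.zero_le _) (Finset.mem_univ i₀)
    omega
  have hothers : ∀ j, j ≠ i₀ → (y j - z j).natAbs = 0 := by
    intro j hj
    have hsplit := Finset.add_sum_erase Finset.univ (fun i => (y i - z i).natAbs)
      (Finset.mem_univ i₀)
    rw [← hsplit, hone] at h
    have hz : ∑ i ∈ Finset.univ.erase i₀, (y i - z i).natAbs = 0 := by omega
    exact Finset.sum_eq_zero_iff.mp hz j (by simp [hj])
  have hcase : y i₀ - z i₀ = 1 ∨ y i₀ - z i₀ = -1 := by
    rcases Int.natAbs_eq (y i₀ - z i₀) with h1 | h1 <;> omega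
  set b₀ : Bool := decide (y i₀ - z i₀ = 1) with hb₀
  refine ⟨(i₀, b₀), ?_, ?_⟩
  · funext j
    by_cases hj : j = i₀
    · subst hj
      simp only [Pi.add_apply, step, if_pos rfl]
      rcases hcase with h1 | h1 <;> simp [hb₀, h1] <;> omega
    · have := hothers j hj
      simp only [Pi.add_apply, step, if_neg hj]
      omega
  · rintro ⟨i, b⟩ he
    simp only at he
    have hstep : step i b = step i₀ b₀ := by
      have h2 : y = z + step i₀ b₀ := by
        funext j
        by_cases hj : j = i₀
        · subst hj
          simp only [Pi.add_apply, step, if_pos rfl]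
          rcases hcase with h1 | h1 <;> simp [hb₀, h1] <;> omega
        · have := hothers j hj
          simp only [Pi.add_apply, step, if_neg hj]
          omega
      have := he.symm.trans h2
      exact add_left_cancel this
    obtain ⟨h1, h2⟩ := step_inj hstep
    simp [h1, h2]

lemma toppleMat_eq (γ : ℝ) (y z : Site d) :
    toppleMat d γ y z = (2 * d + γ) * (if y = z then (1:ℝ) else 0)
      - ∑ e : Fin d × Bool, (if y = z + step e.1 e.2 then (1:ℝ) else 0) := by
  by_cases hyz : y = z
  · subst hyz
    have : ∀ e : Fin d × Bool, (if y = y + step e.1 e.2 then (1:ℝ) else 0) = 0 := by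
      intro e
      rw [if_neg]
      intro h
      exact step_ne_zero e.1 e.2 (by
        have := h
        nth_rewrite 1 [show y = y + 0 by simp] at this
        exact (add_left_cancel this).symm)
    rw [Finset.sum_congr rfl (fun e _ => this e)]
    simp [toppleMat]
  · by_cases hdist : dist1 y z = 1
    · obtain ⟨e₀, he₀, huniq⟩ := exists_unique_step hdist
      have : ∀ e : Fin d × Bool, (if y = z + step e.1 e.2 then (1:ℝ) else 0)
          = if e = e₀ then 1 else 0 := by
        intro e
        by_cases he : y = z + step e.1 e.2
        · rw [if_pos he, if_pos (huniq e he)]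
        · rw [if_neg he, if_neg]
          intro h; subst h; exact he he₀
      rw [Finset.sum_congr rfl (fun e _ => this e)]
      simp [toppleMat, hyz, hdist]
    · have : ∀ e : Fin d × Bool, (if y = z + step e.1 e.2 then (1:ℝ) else 0) = 0 := by
        intro e
        rw [if_neg]
        intro h
        subst h
        exact hdist (dist1_add_step z e.1 e.2)
      rw [Finset.sum_congr rfl (fun e _ => this e)]
      simp [toppleMat, hyz, hdist]

end Lemmas
section Lemmas2

variable {d : ℕ}

lemma toppleMat_offdiag_nonpos (γ : ℝ) {y z : Site d} (h : y ≠ z) :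
    toppleMat d γ y z ≤ 0 := by
  unfold toppleMat
  rw [if_neg h]
  split <;> norm_num

lemma topple_comm (γ : ℝ) (x y : Site d) (η : Config d) :
    topple d γ x (topple d γ y η) = topple d γ y (topple d γ x η) := by
  funext z; simp [topple]; ring

lemma applyList_sum (γ : ℝ) (l : List (Site d)) (η : Config d) (z : Site d) :
    applyList d γ l η z = η z - (l.map (fun y => toppleMat d γ y z)).sum := by
  induction l generalizing η with
  | nil => simp [applyList]
  | cons x t ih =>
    simp only [applyList, ih, List.map_cons, List.sum_cons, topple]
    ring

lemma count_sum_toppleMat (γ : ℝ) (l : List (Site d)) (z : Site d) :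
    (l.map (fun y => toppleMat d γ y z)).sum
      = (2 * d + γ) * (l.count z : ℝ)
        - ∑ e : Fin d × Bool, (l.count (z + step e.1 e.2) : ℝ) := by
  induction l with
  | nil => simp
  | cons y t ih =>
    simp only [List.map_cons, List.sum_cons, ih, List.count_cons]
    rw [toppleMat_eq γ y z]
    push_cast [apply_ite (fun n : ℕ => (n : ℝ))]
    simp only [beq_iff_eq]
    rw [Finset.sum_add_distrib]
    ring

lemma applyList_count (γ : ℝ) (l : List (Site d)) (η : Config d) (z : Site d) :
    applyList d γ l η z = η z - (2 * d + γ) * (l.count z : ℝ)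
      + ∑ e : Fin d × Bool, (l.count (z + step e.1 e.2) : ℝ) := by
  rw [applyList_sum, count_sum_toppleMat]; ring

end Lemmas2
section Lemmas3

variable {d : ℕ}

lemma applyList_topple_comm (γ : ℝ) (l : List (Site d)) (x : Site d) (η : Config d) :
    applyList d γ l (topple d γ x η) = topple d γ x (applyList d γ l η) := by
  induction l generalizing η with
  | nil => simp [applyList]
  | cons y t ih => simp only [applyList, topple_comm γ y x, ih]

lemma applyList_append (γ : ℝ) (l₁ l₂ : List (Site d)) (η : Config d) :
    applyList d γ (l₁ ++ l₂) η = applyList d γ l₂ (applyList d γ l₁ η) := by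
  induction l₁ generalizing η with
  | nil => simp [applyList]
  | cons x t ih =>
    simp only [List.cons_append, applyList]
    exact ih _

lemma list_sum_nonpos {l : List ℝ} (h : ∀ a ∈ l, a ≤ 0) : l.sum ≤ 0 := by
  induction l with
  | nil => simp
  | cons a t ih =>
    simp only [List.sum_cons]
    have := h a List.mem_cons_self
    have := ih (fun b hb => h b (List.mem_cons_of_mem _ hb))
    linarith

lemma legalList_mono (γ : ℝ) {Λ Λ' : Finset (Site d)} (hΛ : Λ ⊆ Λ')
    {η : Config d} {l : List (Site d)} (h : legalList d γ Λ η l) :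
    legalList d γ Λ' η l := by
  induction l generalizing η with
  | nil => trivial
  | cons x t ih => exact ⟨hΛ h.1, h.2.1, ih h.2.2⟩

lemma legalList_append (γ : ℝ) {Λ : Finset (Site d)} {η : Config d}
    {l₁ l₂ : List (Site d)} (h₁ : legalList d γ Λ η l₁)
    (h₂ : legalList d γ Λ (applyList d γ l₁ η) l₂) :
    legalList d γ Λ η (l₁ ++ l₂) := by
  induction l₁ generalizing η with
  | nil => exact h₂
  | cons x t ih => exact ⟨h₁.1, h₁.2.1, ih h₁.2.2 h₂⟩

lemma legalList_nonneg (γ : ℝ) {Λ : Finset (Site d)} {η : Config d}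
    {l : List (Site d)} (h : legalList d γ Λ η l) (hη : ∀ z, 0 ≤ η z) :
    ∀ z, 0 ≤ applyList d γ l η z := by
  induction l generalizing η with
  | nil => exact hη
  | cons x t ih =>
    refine ih h.2.2 ?_
    intro z
    by_cases hz : x = z
    · subst hz
      simp only [topple, toppleMat]
      simp only [eq_self_iff_true, if_true]
      linarith [h.2.1]
    · simp only [topple]
      have := toppleMat_offdiag_nonpos (d := d) γ hz
      linarith [hη z]

/-- Move-to-front: if `l'` is legal from `η` and contains `y`, with `y` unstable
in `η`, then toppling `y` first and then doing `l'.erase y` is legal and gives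
the same final configuration. -/
lemma move_to_front (γ : ℝ) {Λ : Finset (Site d)} {η : Config d}
    {l' : List (Site d)} {y : Site d} (hleg : legalList d γ Λ η l')
    (hy : y ∈ l') (hyΛ : y ∈ Λ) (hyu : 2 * d + γ ≤ η y) :
    legalList d γ Λ (topple d γ y η) (l'.erase y) ∧
      applyList d γ (l'.erase y) (topple d γ y η) = applyList d γ l' η := by
  induction l' generalizing η with
  | nil => simp at hy
  | cons w t ih =>
    by_cases hw : w = y
    · subst hw
      rw [List.erase_cons_head]
      exact ⟨hleg.2.2, rfl⟩
    · rw [List.erase_cons_tail (by simp [hw])]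
      have hyt : y ∈ t := by
        rcases List.mem_cons.mp hy with h | h
        · exact absurd h.symm hw
        · exact h
      have hyu' : 2 * d + γ ≤ (topple d γ w η) y := by
        simp only [topple]
        have := toppleMat_offdiag_nonpos (d := d) γ hw
        linarith
      obtain ⟨h1, h2⟩ := ih hleg.2.2 hyt hyu'
      refine ⟨⟨hleg.1, ?_, ?_⟩, ?_⟩
      · simp only [topple]
        have := toppleMat_offdiag_nonpos (d := d) γ (fun h => hw h.symm : y ≠ w)
        linarith [hleg.2.1]
      · rw [topple_comm]
        exact h1
      · show applyList d γ (t.erase y) (topple d γ w (topple d γ y η)) = _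
        rw [topple_comm, h2]
        rfl

/-- Least action principle (finite version): any legal sequence is dominated,
in counts, by any stabilizing sequence. -/
lemma least_action (γ : ℝ) {Λ Λ' : Finset (Site d)} {η : Config d}
    {l l' : List (Site d)} (hl : legalList d γ Λ η l) (hΛ : Λ ⊆ Λ')
    (hl' : stabilizingList d γ Λ' η l') (hη : ∀ z, 0 ≤ η z) :
    ∀ z, l.count z ≤ l'.count z := by
  induction l generalizing η l' with
  | nil => simp
  | cons y t ih =>
    obtain ⟨hyΛ, hyu, htleg⟩ := hl
    have hyΛ' : y ∈ Λ' := hΛ hyΛ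
    -- y must occur in l'
    have hyl' : y ∈ l' := by
      by_contra hnot
      have hstab := hl'.2 y hyΛ'
      rw [applyList_sum] at hstab
      have hsum : (l'.map (fun w => toppleMat d γ w y)).sum ≤ 0 := by
        apply list_sum_nonpos
        intro a ha
        obtain ⟨w, hw, rfl⟩ := List.mem_map.mp ha
        exact toppleMat_offdiag_nonpos γ (fun h => hnot (h ▸ hw))
      linarith
    obtain ⟨h1, h2⟩ := move_to_front γ hl'.1 hyl' hyΛ' hyu
    have hstab' : stabilizingList d γ Λ' (topple d γ y η) (l'.erase y) := by
      refine ⟨h1, ?_⟩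
      intro w hw
      rw [h2]
      exact hl'.2 w hw
    have hη' : ∀ z, 0 ≤ (topple d γ y η) z := by
      intro z
      by_cases hz : y = z
      · subst hz
        simp only [topple, toppleMat]
        simp only [eq_self_iff_true, if_true]
        linarith
      · simp only [topple]
        have := toppleMat_offdiag_nonpos (d := d) γ hz
        linarith [hη z]
    have hcount := ih htleg hstab' hη'
    intro z
    rcases eq_or_ne y z with rfl | hz
    · have := hcount y
      have hc' : (l'.erase y).count y = l'.count y - 1 := by
        rw [List.count_erase_self]
      rw [List.count_cons_self]
      have hpos : 1 ≤ l'.count y := List.one_le_count_iff.mpr hyl'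
      omega
    · have := hcount z
      have hc' : (l'.erase y).count z = l'.count z := by
        rw [List.count_erase_of_ne (fun h => hz h.symm)]
      rw [List.count_cons_of_ne hz]
      omega

end Lemmas3
section Lemmas4

variable {d : ℕ}

lemma topple_nonneg (γ : ℝ) {η : Config d} {x : Site d} (hη : ∀ z, 0 ≤ η z)
    (hx : 2 * d + γ ≤ η x) : ∀ z, 0 ≤ topple d γ x η z := by
  intro z
  by_cases hz : x = z
  · subst hz
    simp only [topple, toppleMat]
    simp only [eq_self_iff_true, if_true]
    linarith
  · simp only [topple]
    have := toppleMat_offdiag_nonpos (d := d) γ hz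
    linarith [hη z]

lemma dist1_symm (x y : Site d) : dist1 x y = dist1 y x := by
  unfold dist1
  refine Finset.sum_congr rfl (fun i _ => ?_)
  omega

lemma toppleMat_eq' (γ : ℝ) (x z : Site d) :
    toppleMat d γ x z = (2 * d + γ) * (if z = x then (1:ℝ) else 0)
      - ∑ e : Fin d × Bool, (if z = x + step e.1 e.2 then (1:ℝ) else 0) := by
  have hsymm : toppleMat d γ x z = toppleMat d γ z x := by
    unfold toppleMat
    rw [dist1_symm]
    by_cases h : x = z
    · simp [h]
    · rw [if_neg h, if_neg (show ¬ (z = x) from fun hh => h hh.symm)]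
  rw [hsymm, toppleMat_eq]

/-- The region `Λ` together with all neighbors of points of `Λ`. -/
noncomputable def nbhdR (Λ : Finset (Site d)) : Finset (Site d) :=
  Λ ∪ Λ.biUnion (fun y => Finset.image (fun e : Fin d × Bool => y + step e.1 e.2) Finset.univ)

lemma mem_nbhdR_self {Λ : Finset (Site d)} {x : Site d} (hx : x ∈ Λ) : x ∈ nbhdR Λ :=
  Finset.mem_union_left _ hx

lemma mem_nbhdR_step {Λ : Finset (Site d)} {x : Site d} (hx : x ∈ Λ) (e : Fin d × Bool) :
    x + step e.1 e.2 ∈ nbhdR Λ := by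
  refine Finset.mem_union_right _ ?_
  refine Finset.mem_biUnion.mpr ⟨x, hx, ?_⟩
  exact Finset.mem_image.mpr ⟨e, Finset.mem_univ e, rfl⟩

/-- Quadratic weight. -/
noncomputable def qf (z : Site d) : ℝ := ∑ i, ((z i : ℝ))^2

lemma qf_nonneg (z : Site d) : 0 ≤ qf z :=
  Finset.sum_nonneg (fun i _ => sq_nonneg _)

lemma qf_step (x : Site d) (i : Fin d) (b : Bool) :
    qf (x + step i b) = qf x + 2 * (if b then (1:ℝ) else -1) * (x i : ℝ) + 1 := by
  unfold qf
  have key : ∀ j, (((x + step i b) j : ℝ))^2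
      = ((x j : ℝ))^2 + (if j = i then 2 * (if b then (1:ℝ) else -1) * (x i : ℝ) + 1 else 0) := by
    intro j
    by_cases hj : j = i
    · subst hj
      simp only [Pi.add_apply, step, if_pos rfl]
      push_cast
      cases b <;> simp <;> ring
    · simp [Pi.add_apply, step, hj]
  rw [Finset.sum_congr rfl (fun j _ => key j), Finset.sum_add_distrib]
  simp [Finset.sum_ite_eq']
  ring

lemma qf_step_sum (hd : 0 < d) (x : Site d) :
    ∑ e : Fin d × Bool, qf (x + step e.1 e.2) = 2 * d * qf x + 2 * d := by
  rw [Fintype.sum_prod_type]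
  have : ∀ i : Fin d, ∑ b : Bool, qf (x + step i b) = 2 * qf x + 2 := by
    intro i
    rw [Fintype.sum_bool]
    rw [qf_step, qf_step]
    simp
    ring
  rw [Finset.sum_congr rfl (fun i _ => this i)]
  simp [Finset.sum_add_distrib, Finset.card_univ]
  ring

/-- The constant for the weight function. -/
noncomputable def hCst (Λ : Finset (Site d)) : ℝ := ∑ z ∈ nbhdR Λ, qf z

/-- Superharmonic weight function, nonnegative on `nbhdR Λ`. -/
noncomputable def hfun (Λ : Finset (Site d)) (z : Site d) : ℝ :=
  (hCst Λ - qf z) / (2 * d)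

lemma hfun_nonneg (hd : 0 < d) {Λ : Finset (Site d)} {z : Site d} (hz : z ∈ nbhdR Λ) :
    0 ≤ hfun Λ z := by
  unfold hfun
  apply div_nonneg _ (by positivity)
  have : qf z ≤ hCst Λ :=
    Finset.single_le_sum (fun w _ => qf_nonneg w) hz
  linarith

lemma hfun_key (hd : 0 < d) (γ : ℝ) (hγ : 0 ≤ γ) {Λ : Finset (Site d)} {x : Site d}
    (hx : x ∈ Λ) :
    1 ≤ ∑ z ∈ nbhdR Λ, hfun Λ z * toppleMat d γ x z := by
  have hd' : (0:ℝ) < 2 * d := by positivity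
  have expand : ∑ z ∈ nbhdR Λ, hfun Λ z * toppleMat d γ x z
      = (2 * d + γ) * hfun Λ x - ∑ e : Fin d × Bool, hfun Λ (x + step e.1 e.2) := by
    have pt : ∀ z, hfun Λ z * toppleMat d γ x z
        = (2 * ↑d + γ) * (if z = x then hfun Λ z else 0)
          - ∑ e : Fin d × Bool, (if z = x + step e.1 e.2 then hfun Λ z else 0) := by
      intro z
      rw [toppleMat_eq' γ x z]
      rw [mul_sub, Finset.mul_sum]
      congr 1
      · split <;> ring
      · exact Finset.sum_congr rfl (fun e _ => by split <;> ring)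
    rw [Finset.sum_congr rfl (fun z _ => pt z)]
    rw [Finset.sum_sub_distrib]
    congr 1
    · rw [← Finset.mul_sum, Finset.sum_ite_eq' (nbhdR Λ) x (fun z => hfun Λ z),
        if_pos (mem_nbhdR_self hx)]
    · rw [Finset.sum_comm]
      refine Finset.sum_congr rfl (fun e _ => ?_)
      rw [Finset.sum_ite_eq' (nbhdR Λ) (x + step e.1 e.2) (fun z => hfun Λ z),
        if_pos (mem_nbhdR_step hx e)]
  rw [expand]
  have hsum : ∑ e : Fin d × Bool, hfun Λ (x + step e.1 e.2) = 2 * d * hfun Λ x - 1 := by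
    unfold hfun
    rw [← Finset.sum_div]
    rw [Finset.sum_sub_distrib]
    rw [qf_step_sum hd]
    simp only [Finset.sum_const, Finset.card_univ, Fintype.card_prod, Fintype.card_fin,
      Fintype.card_bool, nsmul_eq_mul, Nat.cast_mul, Nat.cast_ofNat]
    field_simp
    ring
  rw [hsum]
  have h0 : 0 ≤ hfun Λ x := hfun_nonneg hd (mem_nbhdR_self hx)
  nlinarith

lemma length_le_phi (hd : 0 < d) (γ : ℝ) (hγ : 0 ≤ γ) {Λ : Finset (Site d)} :
    ∀ (l : List (Site d)) (η : Config d), (∀ z, 0 ≤ η z) → legalList d γ Λ η l →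
      (l.length : ℝ) ≤ ∑ z ∈ nbhdR Λ, hfun Λ z * η z := by
  intro l
  induction l with
  | nil =>
    intro η hη _
    simp only [List.length_nil, Nat.cast_zero]
    exact Finset.sum_nonneg (fun z hz => mul_nonneg (hfun_nonneg hd hz) (hη z))
  | cons x t ih =>
    intro η hη hleg
    obtain ⟨hxΛ, hxu, htleg⟩ := hleg
    have hη' := topple_nonneg γ hη hxu
    have hih := ih (topple d γ x η) hη' htleg
    have hphi : ∑ z ∈ nbhdR Λ, hfun Λ z * (topple d γ x η) z
        = ∑ z ∈ nbhdR Λ, hfun Λ z * η z - ∑ z ∈ nbhdR Λ, hfun Λ z * toppleMat d γ x z := by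
      rw [← Finset.sum_sub_distrib]
      refine Finset.sum_congr rfl (fun z _ => ?_)
      simp only [topple]
      ring
    have hkey := hfun_key hd γ hγ hxΛ
    simp only [List.length_cons]
    push_cast
    rw [hphi] at hih
    linarith

lemma exists_stabilizing (hd : 0 < d) (γ : ℝ) (hγ : 0 ≤ γ) (Λ : Finset (Site d)) :
    ∀ (η : Config d), (∀ z, 0 ≤ η z) → ∃ l, stabilizingList d γ Λ η l := by
  suffices h : ∀ (B : ℕ) (η : Config d), (∀ z, 0 ≤ η z) →
      (∀ l, legalList d γ Λ η l → l.length ≤ B) → ∃ l, stabilizingList d γ Λ η l by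
    intro η hη
    refine h ⌊∑ z ∈ nbhdR Λ, hfun Λ z * η z⌋₊ η hη ?_
    intro l hl
    exact Nat.le_floor (length_le_phi hd γ hγ l η hη hl)
  intro B
  induction B with
  | zero =>
    intro η hη hB
    refine ⟨[], trivial, ?_⟩
    intro x hxΛ
    by_contra hc
    push_neg at hc
    have : ([x] : List (Site d)).length ≤ 0 := hB [x] ⟨hxΛ, hc, trivial⟩
    simp at this
  | succ B ih =>
    intro η hη hB
    by_cases hstable : ∀ x ∈ Λ, η x < 2 * d + γ
    · exact ⟨[], trivial, hstable⟩
    · push_neg at hstable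
      obtain ⟨x, hxΛ, hxu⟩ := hstable
      have hη' := topple_nonneg γ hη hxu
      have hB' : ∀ l, legalList d γ Λ (topple d γ x η) l → l.length ≤ B := by
        intro l hl
        have : (x :: l).length ≤ B + 1 := hB (x :: l) ⟨hxΛ, hxu, hl⟩
        simpa using this
      obtain ⟨l', hl'⟩ := ih (topple d γ x η) hη' hB'
      exact ⟨x :: l', ⟨hxΛ, hxu, hl'.1⟩, hl'.2⟩

end Lemmas4
section Lemmas5

variable {d : ℕ}

lemma toppleO_comm (γ : ℝ) (y : Site d) (o : Option (Site d)) (ξ : Config d) :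
    toppleO d γ o (topple d γ y ξ) = topple d γ y (toppleO d γ o ξ) := by
  cases o with
  | none => rfl
  | some w => exact topple_comm γ w y ξ

lemma toppleO_mono (γ : ℝ) {o : Option (Site d)} {x : Site d} (h : o ≠ some x)
    (ξ : Config d) : ξ x ≤ toppleO d γ o ξ x := by
  cases o with
  | none => exact le_refl _
  | some w =>
    have hw : w ≠ x := fun hh => h (by rw [hh])
    simp only [toppleO, topple]
    have := toppleMat_offdiag_nonpos (d := d) γ hw
    linarith

/-- The deleted sequence: remove the toppling at time `m₀`. -/
def delSeq (s : ℕ → Option (Site d)) (m₀ : ℕ) : ℕ → Option (Site d) :=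
  fun n => if n < m₀ then s n else s (n + 1)

section Del

variable (γ : ℝ) (η : Config d) (s : ℕ → Option (Site d)) {y : Site d} {m₀ : ℕ}

lemma delSeq_cfg_lt (hm : s m₀ = some y) :
    ∀ n, n ≤ m₀ → cfgSeq d γ (topple d γ y η) (delSeq s m₀) n
      = topple d γ y (cfgSeq d γ η s n) := by
  intro n
  induction n with
  | zero => intro _; rfl
  | succ n ih =>
    intro hn
    have hn' : n < m₀ := hn
    show toppleO d γ (delSeq s m₀ n) _ = topple d γ y (toppleO d γ (s n) _)
    rw [ih (le_of_lt hn')]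
    rw [show delSeq s m₀ n = s n from if_pos hn']
    exact toppleO_comm γ y (s n) _

lemma delSeq_cfg_ge (hm : s m₀ = some y) :
    ∀ n, m₀ ≤ n → cfgSeq d γ (topple d γ y η) (delSeq s m₀) n
      = cfgSeq d γ η s (n + 1) := by
  intro n
  induction n with
  | zero =>
    intro hn
    have hm0 : m₀ = 0 := Nat.le_zero.mp hn
    subst hm0
    show cfgSeq d γ (topple d γ y η) (delSeq s 0) 0 = toppleO d γ (s 0) (cfgSeq d γ η s 0)
    rw [hm]
    rfl
  | succ n ih =>
    intro hn
    rcases Nat.lt_or_ge n m₀ with h | h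
    · have hm0 : m₀ = n + 1 := le_antisymm hn h
      subst hm0
      show toppleO d γ (delSeq s (n+1) n) (cfgSeq d γ (topple d γ y η) (delSeq s (n+1)) n)
        = toppleO d γ (s (n+1)) (cfgSeq d γ η s (n+1))
      rw [show delSeq s (n+1) n = s n from if_pos (Nat.lt_succ_self n)]
      rw [delSeq_cfg_lt γ η s hm n (Nat.le_succ n)]
      rw [toppleO_comm, hm]
      rfl
    · show toppleO d γ (delSeq s m₀ n) (cfgSeq d γ (topple d γ y η) (delSeq s m₀) n)
        = toppleO d γ (s (n+1)) (cfgSeq d γ η s (n+1))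
      rw [ih h, show delSeq s m₀ n = s (n+1) from if_neg (by omega)]

end Del

end Lemmas5
section Lemmas6

variable {d : ℕ} (γ : ℝ) (η : Config d) (s : ℕ → Option (Site d)) {y : Site d} {m₀ : ℕ}

lemma delSeq_legal (hm : s m₀ = some y) (hmin : ∀ k, k < m₀ → s k ≠ some y)
    (hleg : legalSeq d γ η s) :
    legalSeq d γ (topple d γ y η) (delSeq s m₀) := by
  intro n x hx
  rcases Nat.lt_or_ge n m₀ with h | h
  · have hsn : s n = some x := by rwa [show delSeq s m₀ n = s n from if_pos h] at hx
    have hxy : y ≠ x := by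
      intro hh
      exact hmin n h (by rw [hsn, hh])
    rw [delSeq_cfg_lt γ η s hm n (le_of_lt h)]
    have h1 := hleg n x hsn
    simp only [topple]
    have := toppleMat_offdiag_nonpos (d := d) γ hxy
    linarith
  · have hsn : s (n+1) = some x := by
      rwa [show delSeq s m₀ n = s (n+1) from if_neg (by omega)] at hx
    rw [delSeq_cfg_ge γ η s hm n h]
    exact hleg (n+1) x hsn

lemma delSeq_exhaustive (hm : s m₀ = some y)
    (hexh : exhaustiveSeq d γ η s) :
    exhaustiveSeq d γ (topple d γ y η) (delSeq s m₀) := by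
  have hbase : ∀ n x, m₀ ≤ n → 2 * d + γ ≤ cfgSeq d γ (topple d γ y η) (delSeq s m₀) n x →
      ∃ m, n ≤ m ∧ delSeq s m₀ m = some x := by
    intro n x hn hu
    rw [delSeq_cfg_ge γ η s hm n hn] at hu
    obtain ⟨m, hm1, hm2⟩ := hexh (n+1) x hu
    refine ⟨m - 1, by omega, ?_⟩
    rw [show delSeq s m₀ (m-1) = s ((m-1)+1) from if_neg (by omega)]
    rw [show (m-1)+1 = m by omega]
    exact hm2
  suffices h : ∀ k n x, m₀ ≤ n + k →
      2 * d + γ ≤ cfgSeq d γ (topple d γ y η) (delSeq s m₀) n x →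
      ∃ m, n ≤ m ∧ delSeq s m₀ m = some x by
    intro n x hu
    exact h m₀ n x (by omega) hu
  intro k
  induction k with
  | zero => intro n x hn hu; exact hbase n x (by omega) hu
  | succ k ih =>
    intro n x hn hu
    rcases Nat.lt_or_ge n m₀ with h | h
    · by_cases hsx : delSeq s m₀ n = some x
      · exact ⟨n, le_rfl, hsx⟩
      · have hu' : 2 * d + γ ≤ cfgSeq d γ (topple d γ y η) (delSeq s m₀) (n+1) x := by
          refine le_trans hu ?_
          exact toppleO_mono γ hsx _
        obtain ⟨m, hm1, hm2⟩ := ih (n+1) x (by omega) hu'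
        exact ⟨m, by omega, hm2⟩
    · exact hbase n x h hu

lemma delSeq_eq_comp : ∀ n, delSeq s m₀ n = s (if n < m₀ then n else n + 1) := by
  intro n
  unfold delSeq
  split <;> rfl

lemma delSeq_preimage (x : Site d) :
    {m : ℕ | delSeq s m₀ m = some x}
      = (fun n => if n < m₀ then n else n + 1) ⁻¹' {m : ℕ | s m = some x} := by
  ext n
  simp only [Set.mem_setOf_eq, Set.mem_preimage, delSeq_eq_comp]

lemma gmap_inj : Function.Injective (fun n : ℕ => if n < m₀ then n else n + 1) := by
  intro a b h
  simp only at h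
  split_ifs at h <;> omega

lemma gmap_range : Set.range (fun n : ℕ => if n < m₀ then n else n + 1)
    = {n : ℕ | n ≠ m₀} := by
  ext n
  simp only [Set.mem_range, Set.mem_setOf_eq]
  constructor
  · rintro ⟨m, hm⟩
    split_ifs at hm <;> omega
  · intro hn
    rcases Nat.lt_or_ge n m₀ with h | h
    · exact ⟨n, if_pos h⟩
    · exact ⟨n - 1, by rw [if_neg (by omega)]; omega⟩

lemma delSeq_finite (hfin : ∀ x : Site d, {m : ℕ | s m = some x}.Finite) :
    ∀ x : Site d, {m : ℕ | delSeq s m₀ m = some x}.Finite := by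
  intro x
  rw [delSeq_preimage]
  exact Set.Finite.preimage (Set.injOn_of_injective gmap_inj) (hfin x)

lemma delSeq_card_ne (hm : s m₀ = some y) {x : Site d} (hx : x ≠ y) :
    Nat.card {m : ℕ | delSeq s m₀ m = some x} = Nat.card {m : ℕ | s m = some x} := by
  rw [Nat.card_coe_set_eq, Nat.card_coe_set_eq, delSeq_preimage]
  rw [show ((fun n : ℕ => if n < m₀ then n else n + 1) ⁻¹' {m : ℕ | s m = some x}).ncard
    = ((fun n : ℕ => if n < m₀ then n else n + 1) ''
      ((fun n : ℕ => if n < m₀ then n else n + 1) ⁻¹' {m : ℕ | s m = some x})).ncard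
    from (Set.ncard_image_of_injective _ gmap_inj).symm]
  rw [Set.image_preimage_eq_inter_range, gmap_range]
  congr 1
  ext n
  simp only [Set.mem_inter_iff, Set.mem_setOf_eq]
  constructor
  · exact fun h => h.1
  · intro h
    refine ⟨h, ?_⟩
    intro hn
    subst hn
    rw [hm] at h
    exact hx (Option.some_injective _ h).symm

lemma delSeq_card_self (hm : s m₀ = some y)
    (hfin : {m : ℕ | s m = some y}.Finite) :
    Nat.card {m : ℕ | s m = some y}
      = Nat.card {m : ℕ | delSeq s m₀ m = some y} + 1 := by
  rw [Nat.card_coe_set_eq, Nat.card_coe_set_eq, delSeq_preimage]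
  rw [show ((fun n : ℕ => if n < m₀ then n else n + 1) ⁻¹' {m : ℕ | s m = some y}).ncard
    = ((fun n : ℕ => if n < m₀ then n else n + 1) ''
      ((fun n : ℕ => if n < m₀ then n else n + 1) ⁻¹' {m : ℕ | s m = some y})).ncard
    from (Set.ncard_image_of_injective _ gmap_inj).symm]
  rw [Set.image_preimage_eq_inter_range, gmap_range]
  have heq : {m : ℕ | s m = some y} ∩ {n : ℕ | n ≠ m₀}
      = {m : ℕ | s m = some y} \ {m₀} := by
    ext n
    simp [Set.mem_diff]
  rw [heq]
  rw [← Set.ncard_diff_singleton_add_one (show m₀ ∈ {m : ℕ | s m = some y} from hm) hfin]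

end Lemmas6
section Lemmas7

variable {d : ℕ}

lemma inf_least_action (γ : ℝ) :
    ∀ (l : List (Site d)) (Λ : Finset (Site d)) (η : Config d)
      (s : ℕ → Option (Site d)),
      legalList d γ Λ η l → legalSeq d γ η s → exhaustiveSeq d γ η s →
      (∀ x, {m : ℕ | s m = some x}.Finite) →
      ∀ z, l.count z ≤ Nat.card {m : ℕ | s m = some z} := by
  intro l
  induction l with
  | nil => simp
  | cons y t ih =>
    intro Λ η s hl hleg hexh hfin
    obtain ⟨hyΛ, hyu, htleg⟩ := hl
    have hex : ∃ m, s m = some y := by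
      obtain ⟨m, _, hm⟩ := hexh 0 y hyu
      exact ⟨m, hm⟩
    classical
    set m₀ := Nat.find hex with hm₀
    have hm : s m₀ = some y := Nat.find_spec hex
    have hmin : ∀ k, k < m₀ → s k ≠ some y := fun k hk => Nat.find_min hex hk
    have h1 := delSeq_legal γ η s hm hmin hleg
    have h2 := delSeq_exhaustive γ η s hm hexh
    have h3 := delSeq_finite (s := s) (m₀ := m₀) hfin
    have hcount := ih Λ (topple d γ y η) (delSeq s m₀) htleg h1 h2 h3
    intro z
    rcases eq_or_ne z y with rfl | hz
    · rw [List.count_cons_self]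
      rw [delSeq_card_self (s := s) hm (hfin z)]
      have := hcount z
      omega
    · rw [List.count_cons_of_ne (Ne.symm hz)]
      rw [← delSeq_card_ne (s := s) hm hz]
      exact hcount z

/-- The list of topplings performed by `s` before time `T`. -/
def prefList (s : ℕ → Option (Site d)) (T : ℕ) : List (Site d) :=
  (List.range T).filterMap s

lemma prefList_succ (s : ℕ → Option (Site d)) (T : ℕ) :
    prefList s (T + 1) = prefList s T ++ (s T).toList := by
  unfold prefList
  rw [List.range_succ, List.filterMap_append]
  cases h : s T <;> simp [h]

lemma prefList_apply (γ : ℝ) (η : Config d) (s : ℕ → Option (Site d)) :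
    ∀ T, applyList d γ (prefList s T) η = cfgSeq d γ η s T := by
  intro T
  induction T with
  | zero => rfl
  | succ T ih =>
    rw [prefList_succ, applyList_append, ih]
    show applyList d γ (s T).toList _ = toppleO d γ (s T) _
    cases s T <;> rfl

lemma prefList_legal (γ : ℝ) (η : Config d) (s : ℕ → Option (Site d))
    (hleg : legalSeq d γ η s) (Λ : Finset (Site d)) :
    ∀ T, (∀ z ∈ prefList s T, z ∈ Λ) → legalList d γ Λ η (prefList s T) := by
  intro T
  induction T with
  | zero => intro _; trivial
  | succ T ih =>
    intro hsub
    rw [prefList_succ]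
    refine legalList_append γ (ih ?_) ?_
    · intro z hz404
      exact hsub z (by rw [prefList_succ]; exact List.mem_append_left _ hz404)
    · rw [prefList_apply]
      cases h : s T with
      | none => trivial
      | some x =>
        refine ⟨?_, hleg T x h, trivial⟩
        refine hsub x ?_
        rw [prefList_succ, h]
        exact List.mem_append_right _ (by simp)

lemma prefList_count (s : ℕ → Option (Site d)) (z : Site d) :
    ∀ T, (prefList s T).count z
      = ((Finset.range T).filter (fun m => s m = some z)).card := by
  intro T
  induction T with
  | zero => rfl
  | succ T ih =>
    rw [prefList_succ, List.count_append, ih, Finset.range_add_one,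
      Finset.filter_insert]
    by_cases h : s T = some z
    · rw [if_pos h, h, Finset.card_insert_of_notMem (by simp)]
      simp
    · rw [if_neg h]
      cases hs : s T with
      | none => simp
      | some w =>
        have : w ≠ z := fun hh => h (by rw [hs, hh])
        simp [List.count_singleton, this]

lemma prefList_count_eq_card (s : ℕ → Option (Site d)) (z : Site d)
    (hfin : {m : ℕ | s m = some z}.Finite) {T : ℕ}
    (hT : ∀ m ∈ {m : ℕ | s m = some z}, m < T) :
    (prefList s T).count z = Nat.card {m : ℕ | s m = some z} := by
  rw [prefList_count]
  rw [Nat.card_coe_set_eq]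
  have : {m : ℕ | s m = some z}
      = ↑((Finset.range T).filter (fun m => s m = some z)) := by
    ext m
    simp only [Finset.coe_filter, Finset.mem_range, Set.mem_setOf_eq]
    exact ⟨fun h => ⟨hT m h, h⟩, fun h => h.2⟩
  rw [this, Set.ncard_coe_finset]

end Lemmas7
theorem stabilization_infinite_volume' (d : ℕ) (hd : 0 < d) (γ : ℝ) (hγ : 0 ≤ γ)
    (η : Config d) (hη : ∀ z, 0 ≤ η z)
    (s : ℕ → Option (Site d)) (hleg : legalSeq d γ η s)
    (hexh : exhaustiveSeq d γ η s)
    (hfin : ∀ x : Site d, {m : ℕ | s m = some x}.Finite) :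
    (∀ x : Site d,
      Nat.card {m : ℕ | s m = some x} =
        sSup {c : ℕ | ∃ (Λ : Finset (Site d)) (l : List (Site d)),
          stabilizingList d γ Λ η l ∧ l.count x = c}) ∧
    (∀ (Λs : ℕ → Finset (Site d)) (ls : ℕ → List (Site d)),
      Monotone Λs → (∀ z : Site d, ∃ n, z ∈ Λs n) →
      (∀ n, stabilizingList d γ (Λs n) η (ls n)) →
      ∀ x : Site d,
        Filter.Tendsto (fun n => applyList d γ (ls n) η x) Filter.atTop
          (nhds (η x - (2 * d + γ) * (Nat.card {m : ℕ | s m = some x} : ℝ) +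
            ∑ e : Fin d × Bool,
              (Nat.card {m : ℕ | s m = some (x + step e.1 e.2)} : ℝ)))) := by
  classical
  -- the witness construction used in both parts
  have hwitness : ∀ (z : Site d) (Λ' : Finset (Site d)),
      ∃ (Λ : Finset (Site d)) (p : List (Site d)),
        legalList d γ Λ η p ∧ ↑Λ ⊆ (↑Λ ∪ ↑Λ' : Set (Site d)) ∧
        p.count z = Nat.card {m : ℕ | s m = some z} := by
    intro z Λ'
    obtain ⟨T₀, hT₀⟩ := (hfin z).bddAbove
    set T := T₀ + 1 with hT
    refine ⟨(prefList s T).toFinset, prefList s T, ?_, by simp, ?_⟩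
    · exact prefList_legal γ η s hleg _ T (fun w hw => List.mem_toFinset.mpr hw)
    · refine prefList_count_eq_card s z (hfin z) ?_
      intro m hm
      have := hT₀ hm
      omega
  constructor
  · intro x
    set S := {c : ℕ | ∃ (Λ : Finset (Site d)) (l : List (Site d)),
        stabilizingList d γ Λ η l ∧ l.count x = c} with hS
    have hub : ∀ c ∈ S, c ≤ Nat.card {m : ℕ | s m = some x} := by
      rintro c ⟨Λ, l, hstab, rfl⟩
      exact inf_least_action γ l Λ η s hstab.1 hleg hexh hfin x
    obtain ⟨Λ, p, hpleg, -, hpcount⟩ := hwitness x ∅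
    obtain ⟨l₀, hl₀⟩ := exists_stabilizing hd γ hγ Λ η hη
    have hge : Nat.card {m : ℕ | s m = some x} ≤ l₀.count x := by
      rw [← hpcount]
      exact least_action γ hpleg (subset_refl Λ) hl₀ hη x
    have hmem : Nat.card {m : ℕ | s m = some x} ∈ S := by
      have hle : l₀.count x ≤ Nat.card {m : ℕ | s m = some x} :=
        hub _ ⟨Λ, l₀, hl₀, rfl⟩
      have : l₀.count x = Nat.card {m : ℕ | s m = some x} := le_antisymm hle hge
      exact ⟨Λ, l₀, hl₀, this⟩
    exact (IsGreatest.csSup_eq ⟨hmem, hub⟩).symm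
  · intro Λs ls hmono hcover hstabs x
    have hkey : ∀ z : Site d, ∀ᶠ n in Filter.atTop,
        (ls n).count z = Nat.card {m : ℕ | s m = some z} := by
      intro z
      obtain ⟨Λ, p, hpleg, -, hpcount⟩ := hwitness z ∅
      have hn₀ : ∃ n₀, ∀ w ∈ Λ, w ∈ Λs n₀ := by
        refine ⟨Λ.sup (fun w => (hcover w).choose), ?_⟩
        intro w hw
        exact hmono (Finset.le_sup hw) (hcover w).choose_spec
      obtain ⟨n₀, hn₀⟩ := hn₀
      rw [Filter.eventually_atTop]
      refine ⟨n₀, fun n hn => ?_⟩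
      have hsub : Λ ⊆ Λs n := fun w hw => hmono hn (hn₀ w hw)
      have hle : p.count z ≤ (ls n).count z :=
        least_action γ hpleg hsub (hstabs n) hη z
      have hge : (ls n).count z ≤ Nat.card {m : ℕ | s m = some z} :=
        inf_least_action γ (ls n) (Λs n) η s (hstabs n).1 hleg hexh hfin z
      omega
    have hAll : ∀ᶠ n in Filter.atTop,
        (ls n).count x = Nat.card {m : ℕ | s m = some x} ∧
        ∀ e : Fin d × Bool,
          (ls n).count (x + step e.1 e.2)
            = Nat.card {m : ℕ | s m = some (x + step e.1 e.2)} := by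
      refine (hkey x).and ?_
      exact (Filter.eventually_all).mpr (fun e => hkey (x + step e.1 e.2))
    refine Filter.Tendsto.congr' ?_ tendsto_const_nhds
    filter_upwards [hAll] with n hn
    rw [applyList_count γ (ls n) η x, hn.1]
    congr 1
    exact Finset.sum_congr rfl (fun e _ => by rw [hn.2 e])

/-- For a `γ`-stabilizable `η`, the toppling numbers `N^{(γ)}(η)_x` equal the
supremum over finite volumes `Λ` of the finite-volume toppling numbers
`N^{(γ)}_Λ(η)_x`, and the infinite-volume stabilization
`S^{(γ)}(η) = η − Δ^{(γ)}N^{(γ)}(η)` is the pointwise limit of the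
finite-volume stabilizations along any exhaustion `Λ ↑ ℤ^d`. -/
theorem stabilization_infinite_volume (d : ℕ) (hd : 0 < d) (γ : ℝ) (hγ : 0 ≤ γ)
    (η : Config d) (hη : ∀ z, 0 ≤ η z)
    (s : ℕ → Option (Site d)) (hleg : legalSeq d γ η s)
    (hexh : exhaustiveSeq d γ η s)
    (hfin : ∀ x : Site d, {m : ℕ | s m = some x}.Finite) :
    (∀ x : Site d,
      Nat.card {m : ℕ | s m = some x} =
        sSup {c : ℕ | ∃ (Λ : Finset (Site d)) (l : List (Site d)),
          stabilizingList d γ Λ η l ∧ l.count x = c}) ∧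
    (∀ (Λs : ℕ → Finset (Site d)) (ls : ℕ → List (Site d)),
      Monotone Λs → (∀ z : Site d, ∃ n, z ∈ Λs n) →
      (∀ n, stabilizingList d γ (Λs n) η (ls n)) →
      ∀ x : Site d,
        Filter.Tendsto (fun n => applyList d γ (ls n) η x) Filter.atTop
          (nhds (η x - (2 * d + γ) * (Nat.card {m : ℕ | s m = some x} : ℝ) +
            ∑ e : Fin d × Bool,
              (Nat.card {m : ℕ | s m = some (x + step e.1 e.2)} : ℝ)))) := by
  exact stabilization_infinite_volume' d hd γ hγ η hη s hleg hexh hfin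
end
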